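/- arXiv:0806.3160 — 7 statements merged into one kernel-verified Lean document; each statement's English description precedes it below -/
import Mathlib

section
/- Let a, b, c be real numbers with a² + b² > c² and a + c > 0, set s = √(a² + b² − c²), and assume b + s > 0 and −b + s > 0. Define δ₁ = 2·arctan((a + c)/(b + s)) and δ₂ = 2·arctan((a + c)/(−b + s)). Let α ≤ β be real numbers such that for every φ ∈ [α, β] one has 0 < (δ₁ + φ)/2 < π and 0 < (δ₂ − φ)/2 < π. Then ∫_α^β log(a·cos(φ) + b·sin(φ) + c) dφ = (β − α)·log(√(a² + b²)/2) + Cl₂(δ₂ − β) − Cl₂(δ₂ − α) + Cl₂(δ₁ + α) − Cl₂(δ₁ + β). -/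
/-!
The trinomial factors as `a cos φ + b sin φ + c = (R/2) · 2 sin ((δ₁ + φ)/2) · 2 sin ((δ₂ - φ)/2)`
with `R = √(a² + b²)`, so the integral splits into `(β - α) log (R/2)` and two translates of
`∫ log (2 sin (t/2)) dt`, which on `(0, 2π)` is `Cl₂ u - Cl₂ v` between `u` and `v`. Indeed, with
`z = e^{it}`, `∑ cos (n t)/n = re ∑ zⁿ/n = -log |1 - z| = -log (2 sin (t/2))` (Dirichlet's test and
Abel's limit theorem), and this series may be integrated termwise by dominated convergence, since
Abel summation bounds its partial sums by `1 / sin (t/2)`.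
-/

open Real

/-- The Clausen function `Cl₂(x) = ∑_{n=1}^∞ sin(n x)/n²`. -/
noncomputable def Cl2 (x : ℝ) : ℝ := ∑' n : ℕ, Real.sin (((n : ℝ) + 1) * x) / ((n : ℝ) + 1) ^ 2

open Filter Finset
open scoped Topology

theorem norm_sum_range_smul_le_of_antitone {E : Type*} [SeminormedAddCommGroup E]
    [NormedSpace ℝ E] {f : ℕ → ℝ} {z : ℕ → E} {B : ℝ} (hf : Antitone f) (hf0 : ∀ n, 0 ≤ f n)
    (hB : ∀ n, ‖∑ i ∈ range n, z i‖ ≤ B) (n : ℕ) :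
    ‖∑ i ∈ range n, f i • z i‖ ≤ f 0 * B := by
  rw [sum_range_by_parts]
  calc _ ≤ ‖f (n - 1) • ∑ i ∈ range n, z i‖
        + ∑ i ∈ range (n - 1), ‖(f (i + 1) - f i) • ∑ j ∈ range (i + 1), z j‖ :=
        norm_sub_le_of_le le_rfl (norm_sum_le _ _)
    _ ≤ f (n - 1) * B + ∑ i ∈ range (n - 1), (f i - f (i + 1)) * B := by
        gcongr with i
        · rw [norm_smul, Real.norm_of_nonneg (hf0 _)]
          exact mul_le_mul_of_nonneg_left (hB n) (hf0 _)
        · have hi : 0 ≤ f i - f (i + 1) := sub_nonneg.2 (hf i.le_succ)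
          rw [norm_smul, Real.norm_eq_abs, abs_sub_comm, abs_of_nonneg hi]
          exact mul_le_mul_of_nonneg_left (hB _) hi
    _ = f 0 * B := by rw [← sum_mul, sum_range_sub']; ring

namespace Complex

theorem one_sub_mem_slitPlane {z : ℂ} (hz : ‖z‖ ≤ 1) (hz1 : z ≠ 1) : 1 - z ∈ slitPlane := by
  rw [mem_slitPlane_iff, sub_re, sub_im, one_re, one_im]
  by_contra! h
  have hre := (re_le_norm z).trans hz
  exact hz1 (Complex.ext (by rw [one_re]; linarith) (by rw [one_im]; linarith))

theorem norm_sum_range_pow_succ_le {z : ℂ} (hz : ‖z‖ ≤ 1) (hz1 : z ≠ 1) (n : ℕ) :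
    ‖∑ i ∈ range n, z ^ (i + 1)‖ ≤ 2 / ‖1 - z‖ := by
  simp_rw [pow_succ', ← mul_sum, geom_sum_eq hz1, norm_mul, norm_div, norm_sub_rev z]
  calc _ ≤ 1 * ((‖z ^ n‖ + ‖(1 : ℂ)‖) / ‖1 - z‖) := by gcongr; exact norm_sub_le _ _
    _ ≤ 2 / ‖1 - z‖ := by
        rw [one_mul, norm_one, norm_pow]
        gcongr
        linarith [pow_le_one₀ (norm_nonneg z) hz (n := n)]

theorem norm_sum_range_pow_succ_div_le {z : ℂ} (hz : ‖z‖ ≤ 1) (hz1 : z ≠ 1) (n : ℕ) :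
    ‖∑ i ∈ range n, z ^ (i + 1) / (i + 1)‖ ≤ 2 / ‖1 - z‖ := by
  have := norm_sum_range_smul_le_of_antitone (f := fun i : ℕ => 1 / ((i : ℝ) + 1))
    (fun i j hij => by dsimp only; gcongr) (fun i => by positivity)
    (norm_sum_range_pow_succ_le hz hz1) n
  simpa [real_smul, div_eq_inv_mul] using this

theorem tendsto_sum_range_pow_succ_div {z : ℂ} (hz : ‖z‖ ≤ 1) (hz1 : z ≠ 1) :
    Tendsto (fun n => ∑ i ∈ range n, z ^ (i + 1) / (i + 1)) atTop (𝓝 (-log (1 - z))) := by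
  have hcauchy : CauchySeq fun n => ∑ i ∈ range n, z ^ (i + 1) / (i + 1) := by
    have := Antitone.cauchySeq_series_mul_of_tendsto_zero_of_bounded
      (f := fun i : ℕ => 1 / ((i : ℝ) + 1)) (fun i j hij => by dsimp only; gcongr)
      tendsto_one_div_add_atTop_nhds_zero_nat (norm_sum_range_pow_succ_le hz hz1)
    simpa [real_smul, div_eq_inv_mul] using this
  obtain ⟨L, hL⟩ := cauchySeq_tendsto_of_complete hcauchy
  -- the extra term `z ^ 0 / 0` vanishes, as `x / 0 = 0`
  have hL' : Tendsto (fun n => ∑ i ∈ range n, z ^ i / i) atTop (𝓝 L) := by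
    rw [← tendsto_add_atTop_iff_nat 1]
    simpa [sum_range_succ'] using hL
  have hlog : Tendsto (fun w : ℂ => ∑' n : ℕ, z ^ n / n * w ^ n) ((𝓝[<] 1).map ofReal)
      (𝓝 (-log (1 - z))) := by
    have hcont : ContinuousAt (fun w : ℂ => -log (1 - w * z)) 1 := by
      have : ContinuousAt log (1 - 1 * z) := by
        rw [one_mul]; exact continuousAt_clog (one_sub_mem_slitPlane hz hz1)
      exact (this.comp (f := fun w : ℂ => 1 - w * z) (by fun_prop)).neg
    have hofReal : Tendsto ofReal (𝓝[<] 1) (𝓝 1) := by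
      simpa using (continuous_ofReal.tendsto 1).mono_left nhdsWithin_le_nhds
    rw [tendsto_map'_iff]
    refine (one_mul z ▸ hcont.tendsto.comp hofReal).congr' ?_
    filter_upwards [Ioo_mem_nhdsLT (show (-1 : ℝ) < 1 by norm_num)] with x hx
    have hxz : ‖(x : ℂ) * z‖ < 1 := by
      rw [norm_mul, norm_real, Real.norm_eq_abs]
      nlinarith [abs_lt.2 hx, abs_nonneg x, norm_nonneg z]
    rw [Function.comp_apply, Function.comp_apply, ← (hasSum_taylorSeries_neg_log hxz).tsum_eq]
    simp_rw [mul_pow]; congr 1; ext n; ring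
  rwa [tendsto_nhds_unique (tendsto_tsum_powerSeries_nhdsWithin_lt hL') hlog] at hL

end Complex

theorem norm_one_sub_exp_I_mul {t : ℝ} (ht0 : 0 ≤ t) (ht : t ≤ 2 * π) :
    ‖1 - Complex.exp (Complex.I * t)‖ = 2 * sin (t / 2) := by
  rw [norm_sub_rev, Complex.norm_exp_I_mul_ofReal_sub_one, Real.norm_of_nonneg]
  have := sin_nonneg_of_nonneg_of_le_pi (x := t / 2) (by linarith) (by linarith)
  positivity

theorem sum_range_cos_div_eq_re (t : ℝ) (m : ℕ) :
    ∑ n ∈ range m, cos ((n + 1) * t) / (n + 1) =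
      (∑ n ∈ range m, Complex.exp (Complex.I * t) ^ (n + 1) / (n + 1)).re := by
  rw [Complex.re_sum]
  refine sum_congr rfl fun n _ => ?_
  rw [← Complex.exp_nat_mul, show ((n + 1 : ℕ) : ℂ) * (Complex.I * t) =
      ((n + 1 : ℝ) * t : ℝ) * Complex.I by push_cast; ring,
    show ((n : ℂ) + 1) = ((n + 1 : ℝ) : ℂ) by push_cast; ring, Complex.div_ofReal_re,
    Complex.exp_ofReal_mul_I_re]

theorem sin_half_pos_of_mem_Ioo {t : ℝ} (ht : t ∈ Set.Ioo 0 (2 * π)) : 0 < sin (t / 2) :=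
  sin_pos_of_pos_of_lt_pi (by linarith [ht.1]) (by linarith [ht.2])

theorem exp_I_mul_ne_one {t : ℝ} (ht : t ∈ Set.Ioo 0 (2 * π)) :
    Complex.exp (Complex.I * t) ≠ 1 := by
  intro h
  have := norm_one_sub_exp_I_mul ht.1.le ht.2.le
  rw [h, sub_self, norm_zero] at this
  linarith [sin_half_pos_of_mem_Ioo ht]

theorem abs_sum_range_cos_div_le {t : ℝ} (ht : t ∈ Set.Ioo 0 (2 * π)) (m : ℕ) :
    |∑ n ∈ range m, cos ((n + 1) * t) / (n + 1)| ≤ (sin (t / 2))⁻¹ := by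
  rw [sum_range_cos_div_eq_re]
  refine (Complex.abs_re_le_norm _).trans ((Complex.norm_sum_range_pow_succ_div_le
    (by simp [Complex.norm_exp_I_mul_ofReal]) (exp_I_mul_ne_one ht) m).trans_eq ?_)
  rw [norm_one_sub_exp_I_mul ht.1.le ht.2.le]
  field_simp

theorem tendsto_sum_range_cos_div {t : ℝ} (ht : t ∈ Set.Ioo 0 (2 * π)) :
    Tendsto (fun m => ∑ n ∈ range m, cos ((n + 1) * t) / (n + 1)) atTop
      (𝓝 (-log (2 * sin (t / 2)))) := by
  simp_rw [sum_range_cos_div_eq_re, ← norm_one_sub_exp_I_mul ht.1.le ht.2.le, ← Complex.log_re,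
    ← Complex.neg_re]
  exact (Complex.continuous_re.tendsto _).comp (Complex.tendsto_sum_range_pow_succ_div
    (by simp [Complex.norm_exp_I_mul_ofReal]) (exp_I_mul_ne_one ht))

theorem hasSum_Cl2 (x : ℝ) : HasSum (fun n : ℕ => sin ((n + 1) * x) / (n + 1) ^ 2) (Cl2 x) := by
  refine Summable.hasSum (.of_norm_bounded (g := fun n : ℕ => 1 / ((n : ℝ) + 1) ^ 2) ?_ fun n => ?_)
  · exact_mod_cast (summable_nat_add_iff 1).2 (summable_one_div_nat_pow.2 one_lt_two)
  · rw [norm_div, norm_pow, Real.norm_of_nonneg (by positivity : (0 : ℝ) ≤ n + 1)]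
    gcongr
    exact abs_sin_le_one _

theorem integral_cos_mul_div (n : ℕ) (u v : ℝ) :
    ∫ t in u..v, cos ((n + 1) * t) / (n + 1) =
      sin ((n + 1) * v) / (n + 1) ^ 2 - sin ((n + 1) * u) / (n + 1) ^ 2 := by
  rw [intervalIntegral.integral_div, intervalIntegral.integral_comp_mul_left cos (by positivity),
    integral_cos, smul_eq_mul]
  field_simp

theorem integral_log_two_mul_sin_half {u v : ℝ} (hu : u ∈ Set.Ioo 0 (2 * π))
    (hv : v ∈ Set.Ioo 0 (2 * π)) :
    ∫ t in u..v, log (2 * sin (t / 2)) = Cl2 u - Cl2 v := by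
  have hsub : Set.uIcc u v ⊆ Set.Ioo 0 (2 * π) := Set.ordConnected_Ioo.uIcc_subset hu hv
  have hcont : ∀ m : ℕ, Continuous fun t : ℝ => ∑ n ∈ range m, cos ((n + 1) * t) / (n + 1) := by
    fun_prop
  have hpartial : Tendsto (fun m : ℕ => ∫ t in u..v, ∑ n ∈ range m, cos ((n + 1) * t) / (n + 1))
      atTop (𝓝 (Cl2 v - Cl2 u)) := by
    refine ((hasSum_Cl2 v).tendsto_sum_nat.sub (hasSum_Cl2 u).tendsto_sum_nat).congr fun m => ?_
    rw [← sum_sub_distrib, intervalIntegral.integral_finsetSum fun (n : ℕ) _ =>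
      (by fun_prop : Continuous fun t : ℝ => cos ((n + 1) * t) / (n + 1)).intervalIntegrable u v]
    exact sum_congr rfl fun n _ => (integral_cos_mul_div n u v).symm
  have hdominated := intervalIntegral.tendsto_integral_filter_of_dominated_convergence
    (μ := MeasureTheory.volume) (fun t => (sin (t / 2))⁻¹)
    (.of_forall fun m => (hcont m).aestronglyMeasurable)
    (.of_forall fun m => .of_forall fun t ht =>
      (Real.norm_eq_abs _).trans_le (abs_sum_range_cos_div_le (hsub (Set.uIoc_subset_uIcc ht)) m))
    (ContinuousOn.intervalIntegrable fun t ht =>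
      ((continuous_sin.comp (continuous_id.div_const 2)).continuousAt.inv₀
        (sin_half_pos_of_mem_Ioo (hsub ht)).ne').continuousWithinAt)
    (.of_forall fun t ht => tendsto_sum_range_cos_div (hsub (Set.uIoc_subset_uIcc ht)))
  rw [intervalIntegral.integral_neg] at hdominated
  linarith [tendsto_nhds_unique hpartial hdominated]

theorem intervalIntegrable_log_two_mul_sin_half_comp {f : ℝ → ℝ} {α β : ℝ} (hf : Continuous f)
    (hmem : ∀ φ ∈ Set.uIcc α β, f φ ∈ Set.Ioo 0 (2 * π)) :
    IntervalIntegrable (fun φ => log (2 * sin (f φ / 2))) MeasureTheory.volume α β :=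
  ((by fun_prop : Continuous fun φ => 2 * sin (f φ / 2)).continuousOn.log fun φ hφ =>
    (mul_pos two_pos (sin_half_pos_of_mem_Ioo (hmem φ hφ))).ne').intervalIntegrable

theorem sqrt_mul_cos_arctan_div {x : ℝ} (y : ℝ) (hx : 0 < x) :
    √(x ^ 2 + y ^ 2) * cos (arctan (y / x)) = x := by
  rw [cos_arctan, show x ^ 2 + y ^ 2 = x ^ 2 * (1 + (y / x) ^ 2) by field_simp,
    sqrt_mul (sq_nonneg x), sqrt_sq hx.le]
  field_simp

theorem sqrt_mul_sin_arctan_div {x : ℝ} (y : ℝ) (hx : 0 < x) :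
    √(x ^ 2 + y ^ 2) * sin (arctan (y / x)) = y := by
  rw [sin_arctan, show x ^ 2 + y ^ 2 = x ^ 2 * (1 + (y / x) ^ 2) by field_simp,
    sqrt_mul (sq_nonneg x), sqrt_sq hx.le]
  field_simp

/-- `A` and `B` are the arguments of `w₁ = (b + s) + i(a + c)` and `w₂ = (s - b) + i(a + c)`, and
`w₁ * conj w₂ = 2(a + c)(a - ib)`, `re (w₁ * w₂) = -2c(a + c)`. -/
theorem sqrt_mul_cos_sin_arctan_sub_add {a b c s : ℝ} (hss : s ^ 2 = a ^ 2 + b ^ 2 - c ^ 2)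
    (hac : 0 < a + c) (hbs : 0 < b + s) (hbs' : 0 < -b + s) :
    let A := arctan ((a + c) / (b + s))
    let B := arctan ((a + c) / (-b + s))
    √(a ^ 2 + b ^ 2) * cos (A - B) = a ∧ √(a ^ 2 + b ^ 2) * sin (A - B) = -b ∧
      √(a ^ 2 + b ^ 2) * cos (A + B) = -c := by
  intro A B
  set r₁ := √((b + s) ^ 2 + (a + c) ^ 2)
  set r₂ := √((-b + s) ^ 2 + (a + c) ^ 2)
  have cA := sqrt_mul_cos_arctan_div (a + c) hbs
  have sA := sqrt_mul_sin_arctan_div (a + c) hbs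
  have cB := sqrt_mul_cos_arctan_div (a + c) hbs'
  have sB := sqrt_mul_sin_arctan_div (a + c) hbs'
  have hcos_sub : r₁ * r₂ * cos (A - B) = 2 * (a + c) * a := by
    rw [cos_sub]
    linear_combination (r₂ * cos B) * cA + (b + s) * cB + (r₂ * sin B) * sA + (a + c) * sB + hss
  have hsin_sub : r₁ * r₂ * sin (A - B) = 2 * (a + c) * -b := by
    rw [sin_sub]
    linear_combination (r₂ * cos B) * sA + (a + c) * cB - (r₂ * sin B) * cA - (b + s) * sB
  have hcos_add : r₁ * r₂ * cos (A + B) = 2 * (a + c) * -c := by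
    rw [cos_add]
    linear_combination (r₂ * cos B) * cA + (b + s) * cB - (r₂ * sin B) * sA - (a + c) * sB + hss
  have hr : r₁ * r₂ = 2 * (a + c) * √(a ^ 2 + b ^ 2) := by
    have hsq : (r₁ * r₂) ^ 2 = (2 * (a + c)) ^ 2 * (a ^ 2 + b ^ 2) := by
      linear_combination -(r₁ * r₂) ^ 2 * sin_sq_add_cos_sq (A - B) + (r₁ * r₂ * sin (A - B) +
        2 * (a + c) * -b) * hsin_sub + (r₁ * r₂ * cos (A - B) + 2 * (a + c) * a) * hcos_sub
    rw [← sqrt_sq (by positivity : 0 ≤ r₁ * r₂), hsq, sqrt_mul (by positivity),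
      sqrt_sq (by positivity)]
  have h2ac : 2 * (a + c) ≠ 0 := by positivity
  rw [hr] at hcos_sub hsin_sub hcos_add
  exact ⟨mul_left_cancel₀ h2ac (by linear_combination hcos_sub),
    mul_left_cancel₀ h2ac (by linear_combination hsin_sub),
    mul_left_cancel₀ h2ac (by linear_combination hcos_add)⟩

theorem mul_cos_add_mul_sin_add_eq {R a b c A B : ℝ} (hcos_sub : R * cos (A - B) = a)
    (hsin_sub : R * sin (A - B) = -b) (hcos_add : R * cos (A + B) = -c) (φ : ℝ) :
    a * cos φ + b * sin φ + c =
      R / 2 * (2 * sin ((2 * A + φ) / 2)) * (2 * sin ((2 * B - φ) / 2)) := by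
  have h := two_mul_sin_mul_sin ((2 * A + φ) / 2) ((2 * B - φ) / 2)
  rw [show (2 * A + φ) / 2 - (2 * B - φ) / 2 = φ + (A - B) by ring,
    show (2 * A + φ) / 2 + (2 * B - φ) / 2 = A + B by ring, cos_add] at h
  linear_combination (-R) * h - cos φ * hcos_sub + sin φ * hsin_sub + hcos_add

theorem integral_log_mul_two_sin_mul_two_sin {K δ₁ δ₂ α β : ℝ} (hK : 0 < K)
    (hmem₁ : ∀ φ ∈ Set.uIcc α β, δ₁ + φ ∈ Set.Ioo 0 (2 * π))
    (hmem₂ : ∀ φ ∈ Set.uIcc α β, δ₂ - φ ∈ Set.Ioo 0 (2 * π)) :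
    ∫ φ in α..β, log (K * (2 * sin ((δ₁ + φ) / 2)) * (2 * sin ((δ₂ - φ) / 2))) =
      (β - α) * log K + Cl2 (δ₂ - β) - Cl2 (δ₂ - α) + Cl2 (δ₁ + α) - Cl2 (δ₁ + β) := by
  have hlog : ∀ φ ∈ Set.uIcc α β,
      log (K * (2 * sin ((δ₁ + φ) / 2)) * (2 * sin ((δ₂ - φ) / 2))) =
        log K + (log (2 * sin ((δ₁ + φ) / 2)) + log (2 * sin ((δ₂ - φ) / 2))) := by
    intro φ hφ
    have h₁ := sin_half_pos_of_mem_Ioo (hmem₁ φ hφ)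
    have h₂ := sin_half_pos_of_mem_Ioo (hmem₂ φ hφ)
    rw [log_mul (by positivity) (by positivity), log_mul (by positivity) (by positivity), add_assoc]
  have hint₁ := intervalIntegrable_log_two_mul_sin_half_comp (continuous_const_add δ₁) hmem₁
  have hint₂ := intervalIntegrable_log_two_mul_sin_half_comp (continuous_sub_left δ₂) hmem₂
  rw [intervalIntegral.integral_congr hlog, intervalIntegral.integral_add intervalIntegrable_const
      (hint₁.add hint₂), intervalIntegral.integral_add hint₁ hint₂, intervalIntegral.integral_const,
    intervalIntegral.integral_comp_add_left (fun t => log (2 * sin (t / 2))),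
    intervalIntegral.integral_comp_sub_left (fun t => log (2 * sin (t / 2))),
    integral_log_two_mul_sin_half (hmem₁ α Set.left_mem_uIcc) (hmem₁ β Set.right_mem_uIcc),
    integral_log_two_mul_sin_half (hmem₂ β Set.right_mem_uIcc) (hmem₂ α Set.left_mem_uIcc),
    smul_eq_mul]
  ring

theorem stmt4 (a b c s δ₁ δ₂ α β : ℝ)
    (habc : c ^ 2 < a ^ 2 + b ^ 2) (hac : 0 < a + c)
    (hs : s = Real.sqrt (a ^ 2 + b ^ 2 - c ^ 2))
    (hbs : 0 < b + s) (hbs' : 0 < -b + s)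
    (hδ₁ : δ₁ = 2 * Real.arctan ((a + c) / (b + s)))
    (hδ₂ : δ₂ = 2 * Real.arctan ((a + c) / (-b + s)))
    (hαβ : α ≤ β)
    (hrange : ∀ φ ∈ Set.Icc α β,
      (0 < (δ₁ + φ) / 2 ∧ (δ₁ + φ) / 2 < π) ∧ (0 < (δ₂ - φ) / 2 ∧ (δ₂ - φ) / 2 < π)) :
    ∫ φ in α..β, Real.log (a * Real.cos φ + b * Real.sin φ + c) =
      (β - α) * Real.log (Real.sqrt (a ^ 2 + b ^ 2) / 2)
        + Cl2 (δ₂ - β) - Cl2 (δ₂ - α) + Cl2 (δ₁ + α) - Cl2 (δ₁ + β) := by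
  have hss : s ^ 2 = a ^ 2 + b ^ 2 - c ^ 2 := by rw [hs, sq_sqrt (by linarith)]
  obtain ⟨hcos_sub, hsin_sub, hcos_add⟩ := sqrt_mul_cos_sin_arctan_sub_add hss hac hbs hbs'
  have hfactor (φ : ℝ) : a * cos φ + b * sin φ + c =
      √(a ^ 2 + b ^ 2) / 2 * (2 * sin ((δ₁ + φ) / 2)) * (2 * sin ((δ₂ - φ) / 2)) := by
    rw [mul_cos_add_mul_sin_add_eq hcos_sub hsin_sub hcos_add, ← hδ₁, ← hδ₂]
  have hR : 0 < √(a ^ 2 + b ^ 2) / 2 := by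
    have := sqrt_pos.2 (lt_of_le_of_lt (sq_nonneg c) habc)
    positivity
  simp_rw [hfactor]
  refine integral_log_mul_two_sin_mul_two_sin hR (fun φ hφ => ?_) (fun φ hφ => ?_) <;>
  · obtain ⟨⟨h₁, h₁'⟩, ⟨h₂, h₂'⟩⟩ := hrange φ (Set.uIcc_of_le hαβ ▸ hφ)
    constructor <;> linarith
end

section
/- Let a, b, c be real numbers with a² + b² > c² and a + c > 0, set s = √(a² + b² − c²), and assume b + s > 0 and −b + s > 0. Define δ₁ = 2·arctan((a + c)/(b + s)) and δ₂ = 2·arctan((a + c)/(−b + s)). Then for every real φ, a·cos(φ) + b·sin(φ) + c = 2·√(a² + b²)·sin((δ₂ − φ)/2)·sin((δ₁ + φ)/2). -/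
/-!
Write `δ₁ = 2 θ₁`, `δ₂ = 2 θ₂` with `θ₁ = arctan u`, `θ₂ = arctan v`, and `r = √(a² + b²)`.
By product-to-sum the right-hand side is `r cos (θ₂ - θ₁ - φ) - r cos (θ₂ + θ₁)`, so it suffices
that `r (cos (θ₂ - θ₁), sin (θ₂ - θ₁), cos (θ₂ + θ₁)) = (a, b, -c)`. After multiplication by
`√(1 + u²) √(1 + v²)` these three quantities become `1 + uv`, `v - u`, `1 - uv`, and since
`s² = a² + b² - c²` the given `u, v` make them `2a / (a - c)`, `2b / (a - c)`, `-2c / (a - c)`.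
-/

open Real

section ArctanPolar

variable (u v : ℝ)

theorem sqrt_mul_sqrt_mul_cos_arctan_sub :
    √(1 + u ^ 2) * √(1 + v ^ 2) * cos (arctan v - arctan u) = 1 + u * v := by
  rw [cos_sub, cos_arctan, cos_arctan, sin_arctan, sin_arctan]
  field_simp

theorem sqrt_mul_sqrt_mul_sin_arctan_sub :
    √(1 + u ^ 2) * √(1 + v ^ 2) * sin (arctan v - arctan u) = v - u := by
  rw [sin_sub, cos_arctan, cos_arctan, sin_arctan, sin_arctan]
  field_simp

theorem sqrt_mul_sqrt_mul_cos_arctan_add :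
    √(1 + u ^ 2) * √(1 + v ^ 2) * cos (arctan v + arctan u) = 1 - u * v := by
  rw [cos_add, cos_arctan, cos_arctan, sin_arctan, sin_arctan]
  field_simp

variable {u v}

theorem polar_of_arctan_sub_add {k a b c : ℝ} (hk : 0 < k) (ha : 1 + u * v = k * a)
    (hb : v - u = k * b) (hc : 1 - u * v = -(k * c)) :
    √(a ^ 2 + b ^ 2) * cos (arctan v - arctan u) = a ∧
      √(a ^ 2 + b ^ 2) * sin (arctan v - arctan u) = b ∧
      √(a ^ 2 + b ^ 2) * cos (arctan v + arctan u) = -c := by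
  have hp : √(1 + u ^ 2) * √(1 + v ^ 2) = k * √(a ^ 2 + b ^ 2) := by
    rw [← sqrt_mul (by positivity), ← sqrt_sq hk.le, ← sqrt_mul (sq_nonneg k)]
    congr 1
    -- `(1 + u²) (1 + v²) = (1 + uv)² + (v - u)²`
    linear_combination (1 + u * v + k * a) * ha + (v - u + k * b) * hb
  refine ⟨?_, ?_, ?_⟩ <;> apply mul_left_cancel₀ hk.ne' <;> rw [← mul_assoc, ← hp]
  · rw [sqrt_mul_sqrt_mul_cos_arctan_sub, ha]
  · rw [sqrt_mul_sqrt_mul_sin_arctan_sub, hb]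
  · rw [sqrt_mul_sqrt_mul_cos_arctan_add, hc, neg_mul_eq_mul_neg]

end ArctanPolar

theorem sin_mul_sin_eq_of_polar {r a b c θ₁ θ₂ : ℝ} (ha : r * cos (θ₂ - θ₁) = a)
    (hb : r * sin (θ₂ - θ₁) = b) (hc : r * cos (θ₂ + θ₁) = -c) (φ : ℝ) :
    a * cos φ + b * sin φ + c = 2 * r * sin ((2 * θ₂ - φ) / 2) * sin ((2 * θ₁ + φ) / 2) := by
  have hsub : (2 * θ₂ - φ) / 2 - (2 * θ₁ + φ) / 2 = θ₂ - θ₁ - φ := by ring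
  have hadd : (2 * θ₂ - φ) / 2 + (2 * θ₁ + φ) / 2 = θ₂ + θ₁ := by ring
  calc a * cos φ + b * sin φ + c = r * (cos (θ₂ - θ₁ - φ) - cos (θ₂ + θ₁)) := by
        rw [cos_sub]; linear_combination (-cos φ) * ha - sin φ * hb + hc
    _ = 2 * r * sin ((2 * θ₂ - φ) / 2) * sin ((2 * θ₁ + φ) / 2) := by
        rw [← hsub, ← hadd, ← two_mul_sin_mul_sin]; ring

theorem stmt5_general (a b c s δ₁ δ₂ : ℝ)
    (hac : 0 < a + c)
    (hs : s = Real.sqrt (a ^ 2 + b ^ 2 - c ^ 2))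
    (hbs : 0 < b + s) (hbs' : 0 < -b + s)
    (hδ₁ : δ₁ = 2 * Real.arctan ((a + c) / (b + s)))
    (hδ₂ : δ₂ = 2 * Real.arctan ((a + c) / (-b + s))) :
    ∀ φ : ℝ, a * Real.cos φ + b * Real.sin φ + c =
      2 * Real.sqrt (a ^ 2 + b ^ 2) * Real.sin ((δ₂ - φ) / 2) * Real.sin ((δ₁ + φ) / 2) := by
  have hs_pos : 0 < s := by linarith
  have hs2 : s ^ 2 = a ^ 2 + b ^ 2 - c ^ 2 := by
    rw [hs] at hs_pos ⊢
    exact sq_sqrt (sqrt_pos.mp hs_pos).le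
  -- `(b + s) (-b + s) = (a + c) (a - c)`
  have hac' : 0 < a - c := by nlinarith [mul_pos hbs hbs']
  obtain ⟨ha, hb, hc⟩ := polar_of_arctan_sub_add (u := (a + c) / (b + s))
    (v := (a + c) / (-b + s)) (k := 2 / (a - c)) (a := a) (b := b) (c := c) (by positivity)
    (by field_simp; linear_combination (-(a + c)) * hs2)
    (by field_simp; linear_combination (-2 * b) * hs2)
    (by field_simp; linear_combination (a + c) * hs2)
  subst hδ₁ hδ₂
  exact sin_mul_sin_eq_of_polar ha hb hc

theorem stmt5 (a b c s δ₁ δ₂ : ℝ)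
    (habc : c ^ 2 < a ^ 2 + b ^ 2) (hac : 0 < a + c)
    (hs : s = Real.sqrt (a ^ 2 + b ^ 2 - c ^ 2))
    (hbs : 0 < b + s) (hbs' : 0 < -b + s)
    (hδ₁ : δ₁ = 2 * Real.arctan ((a + c) / (b + s)))
    (hδ₂ : δ₂ = 2 * Real.arctan ((a + c) / (-b + s))) :
    ∀ φ : ℝ, a * Real.cos φ + b * Real.sin φ + c =
      2 * Real.sqrt (a ^ 2 + b ^ 2) * Real.sin ((δ₂ - φ) / 2) * Real.sin ((δ₁ + φ) / 2) :=
  stmt5_general a b c s δ₁ δ₂ hac hs hbs hbs' hδ₁ hδ₂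
end

section
/- Let b be a real number with 0 < b < 2. Then ∫_{2+b}^∞ (1/(w·√(w² + b² − 4)))·artanh( b/√(w² + b² − 4) ) dw + ∫_2^{2+b} (1/(w·√(w² + b² − 4)))·artanh( (w² − 4 − 2b)/(w·√(w² + b² − 4)) ) dw = 0. -/
open Real

/-- The real inverse hyperbolic tangent, `artanh(x) = (1/2)·log((1+x)/(1−x))`. -/
noncomputable def artanh (x : ℝ) : ℝ := (1 / 2) * Real.log ((1 + x) / (1 - x))

open MeasureTheory Set Filter Topology Function

/-!
Both integrands are inner integrals of the positive kernel `1 / (w (w² + b² - 4 - t²))` over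
`t ∈ (0, β)`: with `s = √(w² + b² - 4)` one has `∫₀^β dt / (s² - t²) = artanh (β / s) / s`, where
`β = b` in the first integral and `β = ±q(w)`, `q(w) = (w² - 4 - 2b) / w`, in the second; `q`
increases from `-b` at `w = 2` to `b` at `w = 2 + b` and vanishes at `w = √(4 + 2b)`.
Swapping the integrations (Tonelli), for fixed `t ∈ (0, b)` the `w`-region is `(W, ∞)`, counted
positively, together with `(2, V)`, counted negatively, where `W` and `V` are the positive roots of
`w² ∓ t w - (4 + 2b)`. With `C = 4 - b² + t²` the kernel has the primitive
`Φ(w) = log (1 - C / w²) / (2C)`, and the resulting `t`-integrand `Φ(2) - Φ(W) - Φ(V)` vanishes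
because `(1 - C / W²) (1 - C / V²) = 1 - C / 4`.
-/

lemma artanh_neg (x : ℝ) : _root_.artanh (-x) = -_root_.artanh x := by
  have : (1 + -x) / (1 - -x) = ((1 + x) / (1 - x))⁻¹ := by rw [inv_div]; ring
  rw [_root_.artanh, _root_.artanh, this, Real.log_inv]
  ring

lemma hasDerivAt_artanh {x : ℝ} (hx : |x| < 1) :
    HasDerivAt _root_.artanh (1 / (1 - x ^ 2)) x := by
  obtain ⟨hx₁, hx₂⟩ := abs_lt.mp hx
  have h₁ : 0 < 1 + x := by linarith
  have h₂ : 0 < 1 - x := by linarith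
  have hquot : HasDerivAt (fun y => (1 + y) / (1 - y)) (2 / (1 - x) ^ 2) x :=
    (((hasDerivAt_id x).const_add 1).div ((hasDerivAt_id x).const_sub 1) h₂.ne').congr_deriv
      (by simp only [id]; ring)
  have h₃ : 1 - x ^ 2 ≠ 0 := by nlinarith
  refine ((hquot.log (div_pos h₁ h₂).ne').const_mul (1 / 2)).congr_deriv ?_
  field_simp
  ring

lemma integral_one_div_sq_sub_sq {s β : ℝ} (hs : 0 < s) (hβ : |β| < s) :
    ∫ t in (0 : ℝ)..β, 1 / (s ^ 2 - t ^ 2) = _root_.artanh (β / s) / s := by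
  have hlt : ∀ t ∈ uIcc 0 β, |t| < s := fun t ht => by
    simpa using (abs_sub_left_of_mem_uIcc ht).trans_lt (by simpa using hβ)
  have hden : ∀ t ∈ uIcc 0 β, s ^ 2 - t ^ 2 ≠ 0 := fun t ht =>
    (sub_pos.mpr (sq_lt_sq.mpr (by rw [abs_of_pos hs]; exact hlt t ht))).ne'
  have hderiv : ∀ t ∈ uIcc 0 β,
      HasDerivAt (fun u => _root_.artanh (u / s) / s) (1 / (s ^ 2 - t ^ 2)) t := fun t ht => by
    have hts : |t / s| < 1 := by rw [abs_div, abs_of_pos hs, div_lt_one hs]; exact hlt t ht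
    have := hden t ht
    refine (((hasDerivAt_artanh hts).comp t ((hasDerivAt_id t).div_const s)).div_const s
      ).congr_deriv ?_
    field_simp
  have hcont : ContinuousOn (fun t => 1 / (s ^ 2 - t ^ 2)) (uIcc 0 β) :=
    continuousOn_const.div (by fun_prop) hden
  rw [intervalIntegral.integral_eq_sub_of_hasDerivAt hderiv hcont.intervalIntegrable]
  simp [_root_.artanh]

noncomputable def kernelPrimitive (C w : ℝ) : ℝ := Real.log (1 - C / w ^ 2) / (2 * C)

lemma hasDerivAt_kernelPrimitive {C w : ℝ} (hC : C ≠ 0) (hw : w ≠ 0) (hCw : C < w ^ 2) :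
    HasDerivAt (kernelPrimitive C) (1 / (w * (w ^ 2 - C))) w := by
  have hpos : 0 < 1 - C / w ^ 2 := by
    rw [sub_pos, div_lt_one (by positivity)]; exact hCw
  have hsub : w ^ 2 - C ≠ 0 := by linarith
  refine ((((hasDerivAt_pow 2 w).inv (pow_ne_zero 2 hw)).const_mul C).const_sub 1
    |>.log hpos.ne' |>.div_const (2 * C)).congr_deriv ?_
  simp only [Pi.inv_apply]
  field_simp
  ring

lemma tendsto_kernelPrimitive_atTop (C : ℝ) : Tendsto (kernelPrimitive C) atTop (𝓝 0) := by
  have h : Tendsto (fun w : ℝ => 1 - C / w ^ 2) atTop (𝓝 1) := by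
    simpa using tendsto_const_nhds.sub
      (tendsto_const_nhds.div_atTop (tendsto_pow_atTop two_ne_zero) :
        Tendsto (fun w : ℝ => C / w ^ 2) atTop (𝓝 0))
  unfold kernelPrimitive
  simpa using (h.log one_ne_zero).div_const (2 * C)

lemma integrableOn_and_integral_Ioi_one_div_mul_sq_sub {C x : ℝ} (hC : C ≠ 0) (hx : 0 < x)
    (hCx : C < x ^ 2) :
    IntegrableOn (fun w => 1 / (w * (w ^ 2 - C))) (Ioi x) ∧
      ∫ w in Ioi x, 1 / (w * (w ^ 2 - C)) = -kernelPrimitive C x := by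
  have hderiv : ∀ w ∈ Ici x, HasDerivAt (kernelPrimitive C) (1 / (w * (w ^ 2 - C))) w :=
    fun w hw => hasDerivAt_kernelPrimitive hC (by linarith [mem_Ici.mp hw])
      (by nlinarith [mem_Ici.mp hw])
  have hnonneg : ∀ w ∈ Ioi x, 0 ≤ 1 / (w * (w ^ 2 - C)) := fun w hw => by
    have hw : x < w := hw
    have : 0 < w := by linarith
    have : 0 < w ^ 2 - C := by nlinarith
    positivity
  have hlim := tendsto_kernelPrimitive_atTop C
  exact ⟨integrableOn_Ioi_deriv_of_nonneg' hderiv hnonneg hlim,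
    by simpa using integral_Ioi_of_hasDerivAt_of_nonneg' hderiv hnonneg hlim⟩

lemma integrableOn_and_integral_Ioo_one_div_mul_sq_sub {C x y : ℝ} (hC : C ≠ 0) (hx : 0 < x)
    (hCx : C < x ^ 2) (hxy : x ≤ y) :
    IntegrableOn (fun w => 1 / (w * (w ^ 2 - C))) (Ioo x y) ∧
      ∫ w in Ioo x y, 1 / (w * (w ^ 2 - C)) = kernelPrimitive C y - kernelPrimitive C x := by
  have hden : ∀ w ∈ uIcc x y, w * (w ^ 2 - C) ≠ 0 := fun w hw => by
    rw [uIcc_of_le hxy] at hw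
    have : 0 < w ^ 2 - C := by nlinarith [hw.1]
    exact (mul_pos (by linarith [hw.1]) this).ne'
  have hcont : ContinuousOn (fun w => 1 / (w * (w ^ 2 - C))) (uIcc x y) :=
    continuousOn_const.div (by fun_prop) hden
  have hderiv : ∀ w ∈ uIcc x y, HasDerivAt (kernelPrimitive C) (1 / (w * (w ^ 2 - C))) w :=
    fun w hw => by
      rw [uIcc_of_le hxy] at hw
      exact hasDerivAt_kernelPrimitive hC (by linarith [hw.1]) (by nlinarith [hw.1])
  refine ⟨(hcont.integrableOn_uIcc).mono_set (uIcc_of_le hxy ▸ Ioo_subset_Icc_self), ?_⟩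
  rw [← integral_Ioc_eq_integral_Ioo, ← intervalIntegral.integral_of_le hxy]
  exact intervalIntegral.integral_eq_sub_of_hasDerivAt hderiv hcont.intervalIntegrable

lemma kernelPrimitive_two_eq_add {C W V : ℝ} (hW0 : W ≠ 0) (hV0 : V ≠ 0) (hW : W ^ 2 ≠ C)
    (hV : V ^ 2 ≠ C) (h : W ^ 2 + V ^ 2 - C = (W * V / 2) ^ 2) :
    kernelPrimitive C 2 = kernelPrimitive C W + kernelPrimitive C V := by
  have one_sub_ne_zero : ∀ {x : ℝ}, x ≠ 0 → x ^ 2 ≠ C → 1 - C / x ^ 2 ≠ 0 := fun hx hxC => by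
    rw [sub_ne_zero, ne_eq, eq_div_iff (pow_ne_zero 2 hx), one_mul]; exact hxC
  have hprod : (1 - C / W ^ 2) * (1 - C / V ^ 2) = 1 - C / 2 ^ 2 := by
    field_simp
    linear_combination (-4 * C) * h
  rw [kernelPrimitive, kernelPrimitive, kernelPrimitive, ← add_div,
    ← log_mul (one_sub_ne_zero hW0 hW) (one_sub_ne_zero hV0 hV), hprod]

noncomputable def posRoot (p t : ℝ) : ℝ := (t + √(t ^ 2 + 4 * p)) / 2

section posRoot

variable {p : ℝ}

lemma continuous_posRoot (p : ℝ) : Continuous (posRoot p) := by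
  unfold posRoot; fun_prop

lemma posRoot_nonneg (hp : 0 ≤ p) (t : ℝ) : 0 ≤ posRoot p t := by
  have : |t| ≤ √(t ^ 2 + 4 * p) := by
    rw [← sqrt_sq_eq_abs]; exact sqrt_le_sqrt (by linarith)
  unfold posRoot; linarith [neg_abs_le t]

lemma posRoot_sub_posRoot_neg (p t : ℝ) : posRoot p t - posRoot p (-t) = t := by
  simp only [posRoot, neg_sq]; ring

lemma posRoot_mul_posRoot_neg (hp : 0 ≤ p) (t : ℝ) : posRoot p t * posRoot p (-t) = p := by
  have h := sq_sqrt (by positivity : 0 ≤ t ^ 2 + 4 * p)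
  simp only [posRoot, neg_sq]
  linear_combination h / 4

lemma sub_posRoot_mul_add_posRoot_neg (hp : 0 ≤ p) (t w : ℝ) :
    (w - posRoot p t) * (w + posRoot p (-t)) = w ^ 2 - t * w - p := by
  linear_combination (-w) * posRoot_sub_posRoot_neg p t - posRoot_mul_posRoot_neg hp t

lemma posRoot_lt_iff (hp : 0 ≤ p) {t w : ℝ} (hw : 0 < w) :
    posRoot p t < w ↔ t < (w ^ 2 - p) / w := by
  have hpos : 0 < w + posRoot p (-t) := by linarith [posRoot_nonneg hp (-t)]
  rw [← sub_pos, ← mul_pos_iff_of_pos_right hpos, sub_posRoot_mul_add_posRoot_neg hp,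
    lt_div_iff₀ hw]
  constructor <;> intro h <;> linarith

lemma lt_posRoot_iff (hp : 0 ≤ p) {t w : ℝ} (hw : 0 < w) :
    w < posRoot p t ↔ (w ^ 2 - p) / w < t := by
  rw [← not_le, ← not_le, not_iff_not]
  have hpos : 0 < w + posRoot p (-t) := by linarith [posRoot_nonneg hp (-t)]
  rw [← sub_nonneg, ← mul_nonneg_iff_of_pos_right hpos, sub_posRoot_mul_add_posRoot_neg hp,
    le_div_iff₀ hw]
  constructor <;> intro h <;> linarith

end posRoot

lemma integrableOn_and_setIntegral_eq_of_nonneg {α β : Type*} [MeasurableSpace α]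
    [MeasurableSpace β] {μ : Measure α} {ν : Measure β} [SFinite μ] [SFinite ν]
    {f : α → β → ℝ} {F : β → ℝ} {g : α → ℝ} {s : Set α} {t : Set β}
    (hs : MeasurableSet s) (ht : MeasurableSet t) (hf : Measurable (uncurry f))
    (hf₀ : ∀ x ∈ s, ∀ y ∈ t, 0 ≤ f x y)
    (hfx : ∀ x ∈ s, IntegrableOn (f x) t ν ∧ ∫ y in t, f x y ∂ν = g x)
    (hg : IntegrableOn g s μ) (hF : ∀ y ∈ t, ∫ x in s, f x y ∂μ = F y) :
    IntegrableOn F t ν ∧ ∫ y in t, F y ∂ν = ∫ x in s, g x ∂μ := by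
  have hfx' : ∀ᵐ x ∂μ.restrict s, IntegrableOn (f x) t ν ∧ ∫ y in t, f x y ∂ν = g x :=
    (ae_restrict_mem hs).mono hfx
  have hF' : ∀ᵐ y ∂ν.restrict t, ∫ x in s, f x y ∂μ = F y := (ae_restrict_mem ht).mono hF
  have hint : Integrable (uncurry f) ((μ.restrict s).prod (ν.restrict t)) := by
    refine (integrable_prod_iff hf.aestronglyMeasurable).mpr
      ⟨hfx'.mono fun x hx => hx.1, hg.congr ?_⟩
    filter_upwards [ae_restrict_mem hs, hfx'] with x hxs hx
    rw [← hx.2]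
    exact setIntegral_congr_fun ht fun y hy => (Real.norm_of_nonneg (hf₀ x hxs y hy)).symm
  refine ⟨hint.integral_prod_right.congr hF', ?_⟩
  rw [← integral_congr_ae hF', ← integral_integral_swap hint]
  exact integral_congr_ae (hfx'.mono fun x hx => hx.2)

noncomputable def kernel (b t w : ℝ) : ℝ := 1 / (w * (w ^ 2 - (4 - b ^ 2 + t ^ 2)))

lemma measurable_kernel (b : ℝ) : Measurable (uncurry (kernel b)) := by
  unfold uncurry kernel; fun_prop

lemma kernel_nonneg {b t w : ℝ} (hw : 2 < w) (ht : t ^ 2 ≤ b ^ 2) : 0 ≤ kernel b t w := by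
  have : 0 < w ^ 2 - (4 - b ^ 2 + t ^ 2) := by nlinarith
  unfold kernel; positivity

lemma posRoot_mem_Ioo {b t : ℝ} (hb : 0 < b) (ht₀ : 0 < t) (htb : t < b) :
    posRoot (4 + 2 * b) t ∈ Ioo √(4 + 2 * b) (2 + b) ∧
      posRoot (4 + 2 * b) (-t) ∈ Ioo 2 √(4 + 2 * b) := by
  have hP : (0 : ℝ) ≤ 4 + 2 * b := by positivity
  have hsqrt : 0 < √(4 + 2 * b) := sqrt_pos.mpr (by positivity)
  refine ⟨⟨?_, ?_⟩, ?_, ?_⟩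
  · rw [lt_posRoot_iff hP hsqrt, sq_sqrt hP, sub_self, zero_div]; exact ht₀
  · rw [posRoot_lt_iff hP (by positivity)]
    convert htb using 1
    field_simp; ring
  · rw [lt_posRoot_iff hP two_pos]; linarith
  · rw [posRoot_lt_iff hP hsqrt, sq_sqrt hP, sub_self, zero_div]; linarith

lemma integral_Ioo_kernel {b w β : ℝ} (hw : 2 < w) (hβ₀ : 0 ≤ β) (hβb : β ≤ b) :
    ∫ t in Ioo 0 β, kernel b t w
      = 1 / (w * √(w ^ 2 + b ^ 2 - 4)) * _root_.artanh (β / √(w ^ 2 + b ^ 2 - 4)) := by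
  have hS : 0 < w ^ 2 + b ^ 2 - 4 := by nlinarith
  set s := √(w ^ 2 + b ^ 2 - 4)
  have hs : 0 < s := sqrt_pos.mpr hS
  have hs2 : s ^ 2 = w ^ 2 + b ^ 2 - 4 := sq_sqrt hS.le
  have hβs : |β| < s := by
    rw [abs_of_nonneg hβ₀]; exact lt_of_pow_lt_pow_left₀ 2 hs.le (by nlinarith)
  have hkernel : ∀ t, kernel b t w = w⁻¹ * (1 / (s ^ 2 - t ^ 2)) := fun t => by
    rw [kernel, hs2]; field_simp; ring_nf
  simp_rw [hkernel]
  rw [← integral_Ioc_eq_integral_Ioo, ← intervalIntegral.integral_of_le hβ₀,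
    intervalIntegral.integral_const_mul, integral_one_div_sq_sub_sq hs hβs]
  field_simp

lemma integral_Ioo_indicator_kernel_of_posRoot_lt {b w : ℝ} (hb : 0 < b)
    (hw₁ : √(4 + 2 * b) < w) (hw₂ : w < 2 + b) :
    ∫ t in Ioo 0 b, (Ioi (posRoot (4 + 2 * b) t)).indicator (kernel b t) w
      = 1 / (w * √(w ^ 2 + b ^ 2 - 4))
          * _root_.artanh ((w ^ 2 - 4 - 2 * b) / (w * √(w ^ 2 + b ^ 2 - 4))) := by
  have hP : (0 : ℝ) ≤ 4 + 2 * b := by positivity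
  have hP2 : √(4 + 2 * b) ^ 2 = 4 + 2 * b := sq_sqrt hP
  have hw₀ : 0 < w := (sqrt_nonneg _).trans_lt hw₁
  have hwP : 4 + 2 * b < w ^ 2 := by nlinarith [sqrt_nonneg (4 + 2 * b)]
  set q := (w ^ 2 - (4 + 2 * b)) / w
  have hq₀ : 0 ≤ q := div_nonneg (by linarith) hw₀.le
  have hqb : q ≤ b := by rw [div_le_iff₀ hw₀]; nlinarith
  have hind : ∀ t, (Ioi (posRoot (4 + 2 * b) t)).indicator (kernel b t) w
      = (Iio q).indicator (fun t => kernel b t w) t := fun t => by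
    simp only [indicator_apply, mem_Ioi, mem_Iio, posRoot_lt_iff hP hw₀]
    rfl
  simp_rw [hind]
  rw [setIntegral_indicator measurableSet_Iio, Ioo_inter_Iio, min_eq_right hqb,
    integral_Ioo_kernel (by nlinarith) hq₀ hqb, div_div]
  ring_nf

lemma integral_Ioo_indicator_kernel_of_lt_posRoot {b w : ℝ} (hb : 0 < b)
    (hw₁ : 2 < w) (hw₂ : w < √(4 + 2 * b)) :
    ∫ t in Ioo 0 b, (Iio (posRoot (4 + 2 * b) (-t))).indicator (kernel b t) w
      = -(1 / (w * √(w ^ 2 + b ^ 2 - 4))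
          * _root_.artanh ((w ^ 2 - 4 - 2 * b) / (w * √(w ^ 2 + b ^ 2 - 4)))) := by
  have hP : (0 : ℝ) ≤ 4 + 2 * b := by positivity
  have hP2 : √(4 + 2 * b) ^ 2 = 4 + 2 * b := sq_sqrt hP
  have hw₀ : 0 < w := by linarith
  have hwP : w ^ 2 < 4 + 2 * b := by nlinarith [sqrt_nonneg (4 + 2 * b)]
  set q := -((w ^ 2 - (4 + 2 * b)) / w)
  have hq₀ : 0 ≤ q := by rw [neg_nonneg]; exact div_nonpos_of_nonpos_of_nonneg (by linarith) hw₀.le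
  have hqb : q ≤ b := by rw [neg_le, le_div_iff₀ hw₀]; nlinarith
  have hind : ∀ t, (Iio (posRoot (4 + 2 * b) (-t))).indicator (kernel b t) w
      = (Iio q).indicator (fun t => kernel b t w) t := fun t => by
    simp only [indicator_apply, mem_Iio, lt_posRoot_iff hP hw₀]
    exact if_congr lt_neg rfl rfl
  simp_rw [hind]
  rw [setIntegral_indicator measurableSet_Iio, Ioo_inter_Iio, min_eq_right hqb,
    integral_Ioo_kernel hw₁ hq₀ hqb, neg_div, _root_.artanh_neg, div_div]
  ring_nf

lemma kernelPrimitive_two_eq_add_posRoot {b t : ℝ} (hb : 0 < b) (ht₀ : 0 < t) (htb : t < b) :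
    kernelPrimitive (4 - b ^ 2 + t ^ 2) 2
      = kernelPrimitive (4 - b ^ 2 + t ^ 2) (posRoot (4 + 2 * b) t)
        + kernelPrimitive (4 - b ^ 2 + t ^ 2) (posRoot (4 + 2 * b) (-t)) := by
  obtain ⟨⟨hW, -⟩, ⟨hV, -⟩⟩ := posRoot_mem_Ioo hb ht₀ htb
  have h2 : 2 < √(4 + 2 * b) := lt_sqrt_of_sq_lt (by linarith)
  set W := posRoot (4 + 2 * b) t
  set V := posRoot (4 + 2 * b) (-t)
  have hd : W - V = t := posRoot_sub_posRoot_neg _ t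
  have hm : W * V = 4 + 2 * b := posRoot_mul_posRoot_neg (by positivity) t
  refine kernelPrimitive_two_eq_add (by linarith) (by linarith) (by nlinarith) (by nlinarith) ?_
  linear_combination (W - V + t) * hd + (2 - (W * V + 4 + 2 * b) / 4) * hm

lemma integrableOn_kernelPrimitive {b : ℝ} {w : ℝ → ℝ} (hb2 : b < 2)
    (hw : ContinuousOn w (Icc 0 b)) (hw2 : ∀ t ∈ Icc 0 b, 2 < w t) :
    IntegrableOn (fun t => kernelPrimitive (4 - b ^ 2 + t ^ 2) (w t)) (Ioo 0 b) := by
  have hC : ∀ t ∈ Icc 0 b, 0 < 4 - b ^ 2 + t ^ 2 := fun t ht => by nlinarith [ht.1, ht.2]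
  have hw0 : ∀ t ∈ Icc 0 b, w t ≠ 0 := fun t ht => by linarith [hw2 t ht]
  have hlog : ∀ t ∈ Icc 0 b, 1 - (4 - b ^ 2 + t ^ 2) / w t ^ 2 ≠ 0 := fun t ht => by
    have := hw2 t ht
    have : (4 - b ^ 2 + t ^ 2) / w t ^ 2 < 1 :=
      (div_lt_one (by positivity)).mpr (by nlinarith [ht.1, ht.2])
    exact (sub_pos.mpr this).ne'
  have hcont : ContinuousOn (fun t => kernelPrimitive (4 - b ^ 2 + t ^ 2) (w t)) (Icc 0 b) :=
    ((continuousOn_const.sub (((continuous_const.add (continuous_pow 2)).continuousOn).div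
      (hw.pow 2) fun t ht => pow_ne_zero 2 (hw0 t ht))).log hlog).div (by fun_prop)
      fun t ht => by linarith [hC t ht]
  exact hcont.integrableOn_Icc.mono_set Ioo_subset_Icc_self

lemma integrableOn_kernelPrimitive_two_add {b : ℝ} (hb : 0 < b) (hb2 : b < 2) :
    IntegrableOn (fun t => kernelPrimitive (4 - b ^ 2 + t ^ 2) (2 + b)) (Ioo 0 b) :=
  integrableOn_kernelPrimitive hb2 continuousOn_const fun _ _ => by linarith

lemma integrableOn_kernelPrimitive_posRoot {b : ℝ} (hb : 0 < b) (hb2 : b < 2) :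
    IntegrableOn (fun t => kernelPrimitive (4 - b ^ 2 + t ^ 2) (posRoot (4 + 2 * b) t)) (Ioo 0 b) :=
  integrableOn_kernelPrimitive hb2 (continuous_posRoot _).continuousOn fun t ht => by
    rw [lt_posRoot_iff (by positivity) two_pos]; linarith [ht.1]

lemma integral_Ioi_artanh {b : ℝ} (hb : 0 < b) (hb2 : b < 2) :
    ∫ w in Ioi (2 + b), 1 / (w * √(w ^ 2 + b ^ 2 - 4)) * _root_.artanh (b / √(w ^ 2 + b ^ 2 - 4))
      = -∫ t in Ioo 0 b, kernelPrimitive (4 - b ^ 2 + t ^ 2) (2 + b) := by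
  have hsection : ∀ t ∈ Ioo 0 b, IntegrableOn (kernel b t) (Ioi (2 + b)) ∧
      ∫ w in Ioi (2 + b), kernel b t w = -kernelPrimitive (4 - b ^ 2 + t ^ 2) (2 + b) :=
    fun t ht => integrableOn_and_integral_Ioi_one_div_mul_sq_sub (by nlinarith [ht.1, ht.2])
      (by linarith) (by nlinarith [ht.1, ht.2])
  rw [← integral_neg]
  exact (integrableOn_and_setIntegral_eq_of_nonneg measurableSet_Ioo measurableSet_Ioi
    (measurable_kernel b)
    (fun t ht w hw => kernel_nonneg (by linarith [mem_Ioi.mp hw]) (by nlinarith [ht.1, ht.2]))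
    hsection (integrableOn_kernelPrimitive_two_add hb hb2).neg
    fun w hw => integral_Ioo_kernel (by linarith [mem_Ioi.mp hw]) hb.le le_rfl).2

lemma integrableOn_and_integral_Ioo_sqrt_two_add_artanh {b : ℝ} (hb : 0 < b) (hb2 : b < 2) :
    IntegrableOn (fun w => 1 / (w * √(w ^ 2 + b ^ 2 - 4))
        * _root_.artanh ((w ^ 2 - 4 - 2 * b) / (w * √(w ^ 2 + b ^ 2 - 4))))
        (Ioo √(4 + 2 * b) (2 + b)) ∧
      ∫ w in Ioo √(4 + 2 * b) (2 + b), 1 / (w * √(w ^ 2 + b ^ 2 - 4))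
          * _root_.artanh ((w ^ 2 - 4 - 2 * b) / (w * √(w ^ 2 + b ^ 2 - 4)))
        = ∫ t in Ioo 0 b, (kernelPrimitive (4 - b ^ 2 + t ^ 2) (2 + b)
            - kernelPrimitive (4 - b ^ 2 + t ^ 2) (posRoot (4 + 2 * b) t)) := by
  have h2 : 2 < √(4 + 2 * b) := lt_sqrt_of_sq_lt (by linarith)
  have hsection : ∀ t ∈ Ioo 0 b,
      IntegrableOn ((Ioi (posRoot (4 + 2 * b) t)).indicator (kernel b t))
        (Ioo √(4 + 2 * b) (2 + b)) ∧
      ∫ w in Ioo √(4 + 2 * b) (2 + b), (Ioi (posRoot (4 + 2 * b) t)).indicator (kernel b t) w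
        = kernelPrimitive (4 - b ^ 2 + t ^ 2) (2 + b)
          - kernelPrimitive (4 - b ^ 2 + t ^ 2) (posRoot (4 + 2 * b) t) := fun t ht => by
    obtain ⟨⟨hW₁, hW₂⟩, -⟩ := posRoot_mem_Ioo hb ht.1 ht.2
    have hset : Ioo √(4 + 2 * b) (2 + b) ∩ Ioi (posRoot (4 + 2 * b) t)
        = Ioo (posRoot (4 + 2 * b) t) (2 + b) := by
      rw [inter_comm, ← Ioi_inter_Iio, ← inter_assoc, Ioi_inter_Ioi, sup_eq_left.mpr hW₁.le,
        Ioi_inter_Iio]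
    rw [integrableOn_indicator_iff measurableSet_Ioi, setIntegral_indicator measurableSet_Ioi,
      inter_comm, hset]
    exact integrableOn_and_integral_Ioo_one_div_mul_sq_sub (by nlinarith [ht.1, ht.2]) (by linarith)
      (by nlinarith [ht.1, ht.2]) hW₂.le
  have hmeas : Measurable
      (uncurry fun t w => (Ioi (posRoot (4 + 2 * b) t)).indicator (kernel b t) w) :=
    (measurable_kernel b).indicator
      (measurableSet_lt ((continuous_posRoot _).measurable.comp measurable_fst) measurable_snd)
  exact integrableOn_and_setIntegral_eq_of_nonneg measurableSet_Ioo measurableSet_Ioo hmeas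
    (fun t ht w hw => indicator_apply_nonneg fun _ => kernel_nonneg (by linarith [hw.1])
      (by nlinarith [ht.1, ht.2])) hsection
    ((integrableOn_kernelPrimitive_two_add hb hb2).sub
      (integrableOn_kernelPrimitive_posRoot hb hb2))
    fun w hw => integral_Ioo_indicator_kernel_of_posRoot_lt hb hw.1 hw.2

lemma integrableOn_and_integral_Ioo_two_sqrt_artanh {b : ℝ} (hb : 0 < b) (hb2 : b < 2) :
    IntegrableOn (fun w => 1 / (w * √(w ^ 2 + b ^ 2 - 4))
        * _root_.artanh ((w ^ 2 - 4 - 2 * b) / (w * √(w ^ 2 + b ^ 2 - 4)))) (Ioo 2 √(4 + 2 * b)) ∧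
      ∫ w in Ioo 2 √(4 + 2 * b), 1 / (w * √(w ^ 2 + b ^ 2 - 4))
          * _root_.artanh ((w ^ 2 - 4 - 2 * b) / (w * √(w ^ 2 + b ^ 2 - 4)))
        = ∫ t in Ioo 0 b, kernelPrimitive (4 - b ^ 2 + t ^ 2) (posRoot (4 + 2 * b) t) := by
  have hsection : ∀ t ∈ Ioo 0 b,
      IntegrableOn ((Iio (posRoot (4 + 2 * b) (-t))).indicator (kernel b t)) (Ioo 2 √(4 + 2 * b)) ∧
      ∫ w in Ioo 2 √(4 + 2 * b), (Iio (posRoot (4 + 2 * b) (-t))).indicator (kernel b t) w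
        = -kernelPrimitive (4 - b ^ 2 + t ^ 2) (posRoot (4 + 2 * b) t) := fun t ht => by
    obtain ⟨-, ⟨hV₁, hV₂⟩⟩ := posRoot_mem_Ioo hb ht.1 ht.2
    rw [integrableOn_indicator_iff measurableSet_Iio, setIntegral_indicator measurableSet_Iio,
      inter_comm, Ioo_inter_Iio, min_eq_right hV₂.le]
    obtain ⟨hint, heq⟩ := integrableOn_and_integral_Ioo_one_div_mul_sq_sub
      (C := 4 - b ^ 2 + t ^ 2) (by nlinarith [ht.1, ht.2]) two_pos (by nlinarith [ht.1, ht.2])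
      hV₁.le
    refine ⟨hint, heq.trans ?_⟩
    rw [kernelPrimitive_two_eq_add_posRoot hb ht.1 ht.2]
    ring
  have hmeas : Measurable
      (uncurry fun t w => (Iio (posRoot (4 + 2 * b) (-t))).indicator (kernel b t) w) :=
    (measurable_kernel b).indicator
      (measurableSet_lt measurable_snd ((continuous_posRoot _).measurable.comp measurable_fst.neg))
  have key := integrableOn_and_setIntegral_eq_of_nonneg measurableSet_Ioo measurableSet_Ioo hmeas
    (fun t ht w hw => indicator_apply_nonneg fun _ => kernel_nonneg hw.1
      (by nlinarith [ht.1, ht.2])) hsection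
    (integrableOn_kernelPrimitive_posRoot hb hb2).neg
    fun w hw => integral_Ioo_indicator_kernel_of_lt_posRoot hb hw.1 hw.2
  rw [integral_neg, integral_neg, neg_inj] at key
  exact ⟨by simpa using key.1.neg, key.2⟩

theorem stmt8 (b : ℝ) (hb0 : 0 < b) (hb2 : b < 2) :
    (∫ w in Set.Ioi (2 + b),
        (1 / (w * Real.sqrt (w ^ 2 + b ^ 2 - 4))) * _root_.artanh (b / Real.sqrt (w ^ 2 + b ^ 2 - 4)))
      + (∫ w in (2 : ℝ)..(2 + b),
          (1 / (w * Real.sqrt (w ^ 2 + b ^ 2 - 4)))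
            * _root_.artanh ((w ^ 2 - 4 - 2 * b) / (w * Real.sqrt (w ^ 2 + b ^ 2 - 4)))) = 0 := by
  have h₁ : 2 < √(4 + 2 * b) := lt_sqrt_of_sq_lt (by linarith)
  have h₂ : √(4 + 2 * b) < 2 + b := (sqrt_lt' (by linarith)).mpr (by nlinarith)
  obtain ⟨hint₁, heq₁⟩ := integrableOn_and_integral_Ioo_two_sqrt_artanh hb0 hb2
  obtain ⟨hint₂, heq₂⟩ := integrableOn_and_integral_Ioo_sqrt_two_add_artanh hb0 hb2
  rw [← intervalIntegral.integral_add_adjacent_intervals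
      ((intervalIntegrable_iff_integrableOn_Ioo_of_le h₁.le).mpr hint₁)
      ((intervalIntegrable_iff_integrableOn_Ioo_of_le h₂.le).mpr hint₂),
    intervalIntegral.integral_of_le h₁.le, intervalIntegral.integral_of_le h₂.le,
    integral_Ioc_eq_integral_Ioo, integral_Ioc_eq_integral_Ioo, heq₁, heq₂,
    integral_Ioi_artanh hb0 hb2,
    integral_sub (integrableOn_kernelPrimitive_two_add hb0 hb2)
      (integrableOn_kernelPrimitive_posRoot hb0 hb2)]
  ring
end

section
/- Let a, b be real numbers with 0 < a, 0 < b, and a² + b² < 4. Set c = √(4 − b²), d = √(4 − a² − b²), p = a + b + 2, φ = arctan(d/p), φₐ = arctan(d/a), and φ_b = arctan(d/b). Then 2·arctan((c·d − a·b)/(2d + b·c)) = −2φ + φₐ + 2φ_b − π/2. -/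
/-!
Since `c² = a² + d²`, the half-angle formula gives `φa = π/2 - 2 arctan (a / (c + d))`, and the
subtraction formula gives `φb - φ = arctan u` with `u = d (p - b) / (b p + d²)`. The claim then
reduces to `arctan T + arctan (a / (c + d)) = arctan u` for `T = (c d - a b) / (2 d + b c)`: by the
addition formula this is a polynomial identity modulo `c² = 4 - b²` and `d² = 4 - a² - b²`.
-/

open Real

namespace Real

lemma arctan_add_eq_of_add_eq_mul {x y z : ℝ} (h : x * y < 1) (hz : x + y = z * (1 - x * y)) :
    arctan x + arctan y = arctan z := by
  rw [arctan_add h, hz, mul_div_cancel_right₀ _ (sub_pos.2 h).ne']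

lemma arctan_div_sub_arctan_div (d : ℝ) {x y : ℝ} (hx : 0 < x) (hy : 0 < y) :
    arctan (d / x) - arctan (d / y) = arctan (d * (y - x) / (x * y + d ^ 2)) := by
  have hxy : 0 < x * y + d ^ 2 := by positivity
  rw [sub_eq_add_neg, ← arctan_neg]
  refine arctan_add_eq_of_add_eq_mul ?_ ?_
  · have : 0 ≤ d / x * (d / y) := by rw [div_mul_div_comm, ← sq]; positivity
    rw [mul_neg]
    linarith
  · field_simp
    ring

-- The half-angle formula `tan (θ / 2) = sin θ / (1 + cos θ)` for `θ = arctan (a / d)`.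
lemma arctan_div_eq_two_mul_arctan (a : ℝ) {d : ℝ} (hd : 0 < d) :
    arctan (a / d) = 2 * arctan (a / (√(a ^ 2 + d ^ 2) + d)) := by
  set s := √(a ^ 2 + d ^ 2)
  have hs : s ^ 2 = a ^ 2 + d ^ 2 := sq_sqrt (by positivity)
  have hsd : 0 < s + d := by positivity
  have has : |a| < s + d := by
    have := abs_lt_of_sq_lt_sq (show a ^ 2 < s ^ 2 by nlinarith) (sqrt_nonneg _)
    linarith
  have hq := abs_lt.1 <| (abs_div a (s + d)).trans_lt <| by
    rwa [abs_of_pos hsd, div_lt_one hsd]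
  rw [two_mul_arctan hq.1 hq.2]
  congr 1
  have : (s + d) ^ 2 - a ^ 2 ≠ 0 := by nlinarith
  field_simp
  linear_combination a * hs

lemma arctan_div_eq_pi_div_two_sub {a d : ℝ} (ha : 0 < a) (hd : 0 < d) :
    arctan (d / a) = π / 2 - 2 * arctan (a / (√(a ^ 2 + d ^ 2) + d)) := by
  rw [← inv_div, arctan_inv_of_pos (div_pos ha hd), arctan_div_eq_two_mul_arctan a hd]

end Real

theorem stmt13 (a b c d p φ φa φb : ℝ) (ha : 0 < a) (hb : 0 < b) (hab : a ^ 2 + b ^ 2 < 4)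
    (hc : c = Real.sqrt (4 - b ^ 2)) (hd : d = Real.sqrt (4 - a ^ 2 - b ^ 2))
    (hp : p = a + b + 2) (hφ : φ = Real.arctan (d / p)) (hφa : φa = Real.arctan (d / a))
    (hφb : φb = Real.arctan (d / b)) :
    2 * Real.arctan ((c * d - a * b) / (2 * d + b * c)) =
      -2 * φ + φa + 2 * φb - π / 2 := by
  have hd0 : 0 < d := hd ▸ sqrt_pos.2 (by linarith)
  have hc0 : 0 < c := hc ▸ sqrt_pos.2 (by nlinarith)
  have hd2 : d ^ 2 = 4 - a ^ 2 - b ^ 2 := hd ▸ sq_sqrt (by linarith)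
  have hc2 : c ^ 2 = 4 - b ^ 2 := hc ▸ sq_sqrt (by nlinarith)
  have hca : c = √(a ^ 2 + d ^ 2) := by rw [hc, hd2]; ring_nf
  have ha2 : a < 2 := by nlinarith
  have hp0 : 0 < p := by linarith
  set q := a / (c + d)
  set u := d * (p - b) / (b * p + d ^ 2)
  have hφa_half : φa = π / 2 - 2 * arctan q := by
    rw [hφa, arctan_div_eq_pi_div_two_sub ha hd0, ← hca]
  have hφb_sub : φb - φ = arctan u := by
    rw [hφb, hφ, arctan_div_sub_arctan_div d hb hp0]
  have hsum : arctan ((c * d - a * b) / (2 * d + b * c)) + arctan q = arctan u := by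
    apply arctan_add_eq_of_add_eq_mul
    · rw [div_mul_div_comm, div_lt_one (by positivity)]
      -- `(c d - a b) a < 2 c d < (2 d + b c) (c + d)` since `a < 2`
      nlinarith [mul_pos hc0 hd0, mul_pos (mul_pos ha ha) hb, mul_pos (mul_pos hb hc0) hc0]
    · simp only [q, u, hp]
      field_simp
      linear_combination (b ^ 2 * d + d ^ 3) * hc2 + (c * d ^ 2 - a * b * d - b ^ 2 * d) * hd2
  linarith
end

section
/- Let a, b be real numbers with 0 < a, 0 < b, and a² + b² < 4. Set d = √(4 − a² − b²), p = a + b + 2, φ = arctan(d/p), φₐ = arctan(d/a), and φ_b = arctan(d/b). Then arctan((a + b − 2)/d) = π/2 + φ − φₐ − φ_b. -/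
/-!
With `d² = 4 - a² - b²` one has the factorization
`i · (a + b + 2 + d i) · (a - d i) · (b - d i) = (a + 2)(b + 2) · (d + (a + b - 2) i)`.
Since `arctan (y / x)` is the argument of `x + y i` for `x > 0`, taking arguments gives the
identity modulo `2π`, and both sides lie in `(-π, π]`.
-/

open Real

open Complex in
lemma Complex.arg_ofReal_add_ofReal_mul_I {x : ℝ} (hx : 0 < x) (y : ℝ) :
    arg (x + y * I) = Real.arctan (y / x) := by
  have hre : 0 < (x + y * I : ℂ).re := by simpa using hx
  have harg := abs_lt.1 (abs_arg_lt_pi_div_two_iff.2 (Or.inl hre))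
  rw [← Real.arctan_tan harg.1 harg.2, tan_arg]
  simp

lemma Real.Angle.eq_of_coe_eq_of_mem_Ioc {θ ψ : ℝ} (hθ : θ ∈ Set.Ioc (-π) π) (hψ : ψ ∈ Set.Ioc (-π) π)
    (h : (θ : Real.Angle) = ψ) : θ = ψ := by
  rw [← Real.Angle.toReal_coe_eq_self_iff.2 hθ, ← Real.Angle.toReal_coe_eq_self_iff.2 hψ, h]

open Complex ComplexConjugate

lemma I_mul_mul_conj_mul_conj_eq {a b d : ℝ} (hd : d ^ 2 = 4 - a ^ 2 - b ^ 2) :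
    I * ((↑(a + b + 2) + d * I) * conj (a + d * I) * conj (b + d * I)) =
      ↑((a + 2) * (b + 2)) * (d + ↑(a + b - 2) * I) := by
  apply Complex.ext <;> simp
  · linear_combination d * hd
  · linear_combination (-2) * hd

lemma coe_arg_I_mul_mul_conj_mul_conj {a b d p : ℝ} (ha : 0 < a) (hb : 0 < b) (hp : 0 < p) :
    (arg (I * ((p + d * I) * conj (a + d * I) * conj (b + d * I))) : Real.Angle) =
      ↑(π / 2 + Real.arctan (d / p) - Real.arctan (d / a) - Real.arctan (d / b)) := by
  have hne {x : ℝ} (hx : 0 < x) : (x + d * I : ℂ) ≠ 0 := fun h => by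
    simpa [hx.ne'] using congrArg re h
  have hne' {x : ℝ} (hx : 0 < x) : conj (x + d * I : ℂ) ≠ 0 := (map_ne_zero _).2 (hne hx)
  rw [arg_mul_coe_angle I_ne_zero (mul_ne_zero (mul_ne_zero (hne hp) (hne' ha)) (hne' hb)),
    arg_mul_coe_angle (mul_ne_zero (hne hp) (hne' ha)) (hne' hb),
    arg_mul_coe_angle (hne hp) (hne' ha), arg_conj_coe_angle, arg_conj_coe_angle, arg_I,
    arg_ofReal_add_ofReal_mul_I hp, arg_ofReal_add_ofReal_mul_I ha,
    arg_ofReal_add_ofReal_mul_I hb]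
  simp only [Real.Angle.coe_add, Real.Angle.coe_sub]
  abel

theorem stmt14 (a b d p φ φa φb : ℝ) (ha : 0 < a) (hb : 0 < b) (hab : a ^ 2 + b ^ 2 < 4)
    (hd : d = Real.sqrt (4 - a ^ 2 - b ^ 2)) (hp : p = a + b + 2)
    (hφ : φ = Real.arctan (d / p)) (hφa : φa = Real.arctan (d / a))
    (hφb : φb = Real.arctan (d / b)) :
    Real.arctan ((a + b - 2) / d) = π / 2 + φ - φa - φb := by
  subst hφ hφa hφb
  have hd0 : 0 < d := hd ▸ Real.sqrt_pos.2 (by linarith)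
  have hd2 : d ^ 2 = 4 - a ^ 2 - b ^ 2 := hd ▸ Real.sq_sqrt (by linarith)
  have hp0 : 0 < p := by linarith
  have key := congrArg (fun z => (arg z : Real.Angle)) (I_mul_mul_conj_mul_conj_eq hd2)
  simp only [← hp] at key
  rw [coe_arg_I_mul_mul_conj_mul_conj ha hb hp0, arg_real_mul _ (by positivity),
    arg_ofReal_add_ofReal_mul_I hd0] at key
  refine Real.Angle.eq_of_coe_eq_of_mem_Ioc ?_ ?_ key.symm
  · constructor <;> linarith [pi_pos, neg_pi_div_two_lt_arctan ((a + b - 2) / d),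
      arctan_lt_pi_div_two ((a + b - 2) / d)]
  · constructor <;> linarith [pi_pos, neg_pi_div_two_lt_arctan (d / p),
      arctan_lt_pi_div_two (d / p), arctan_lt_pi_div_two (d / a), arctan_lt_pi_div_two (d / b),
      arctan_pos.2 (div_pos hd0 ha), arctan_pos.2 (div_pos hd0 hb)]
end

section
/- For every real z with −1 < z < 1, ∑_{n=1}^∞ (H_n/(2n+1))·z^{2n+1} = (1/2)·( (1/2)·log²(1 − z) − (1/2)·log²(1 + z) + log(2)·log((1 − z)/(1 + z)) + Li₂((1 + z)/2) − Li₂((1 − z)/2) ), where H_n = ∑_{k=1}^n 1/k. -/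
open Real

/-- The `n`-th harmonic number `H_n = ∑_{k=1}^n 1/k`. -/
noncomputable def H (n : ℕ) : ℝ := ∑ k ∈ Finset.range n, 1 / ((k : ℝ) + 1)

/-- The real dilogarithm `Li₂(x) = ∑_{n=1}^∞ xⁿ/n²` (for `|x| ≤ 1`). -/
noncomputable def Li2 (x : ℝ) : ℝ := ∑' n : ℕ, x ^ (n + 1) / ((n : ℝ) + 1) ^ 2

/-!
Both sides vanish at `z = 0` and have the same derivative `-log (1 - z²) / (1 - z²)` on `(-1, 1)`.
On the left this comes from termwise differentiation and the generating function
`∑ Hₙ yⁿ = -log (1 - y) / (1 - y)` at `y = z²`; on the right from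
`Li₂'(x) = -log (1 - x) / x`.
-/

open Set

theorem IsOpen.eqOn_of_hasDerivAt_eq {𝕜 G : Type*} [RCLike 𝕜] [NormedAddCommGroup G]
    [NormedSpace 𝕜 G] {f g f' : 𝕜 → G} {s : Set 𝕜} (hs : IsOpen s)
    (hs' : IsPreconnected s) (hf : ∀ x ∈ s, HasDerivAt f (f' x) x)
    (hg : ∀ x ∈ s, HasDerivAt g (f' x) x) {a : 𝕜} (ha : a ∈ s) (hfga : f a = g a) :
    s.EqOn f g :=
  hs.eqOn_of_deriv_eq hs' (fun x hx => (hf x hx).differentiableAt.differentiableWithinAt)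
    (fun x hx => (hg x hx).differentiableAt.differentiableWithinAt)
    (fun x hx => (hf x hx).deriv.trans (hg x hx).deriv.symm) ha hfga

theorem hasDerivAt_tsum_mul_pow (c : ℕ → ℝ) (e : ℕ → ℕ)
    (hc : ∀ r, 0 ≤ r → r < 1 → Summable fun n => |c n * (e n + 1)| * r ^ e n)
    {x : ℝ} (hx : |x| < 1) :
    HasDerivAt (fun w => ∑' n, c n * w ^ (e n + 1)) (∑' n, c n * (e n + 1) * x ^ e n) x := by
  set r := (1 + |x|) / 2
  have hxr : |x| < r := by simp only [r]; linarith
  have hr1 : r < 1 := by simp only [r]; linarith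
  refine hasDerivAt_tsum_of_isPreconnected (hc r (by positivity) hr1) isOpen_Ioo
    (convex_Ioo (-r) r).isPreconnected (g := fun n w => c n * w ^ (e n + 1))
    (g' := fun n w => c n * (e n + 1) * w ^ e n) (fun n w _ => ?_) (fun n w hw => ?_)
    (y₀ := 0) ?_ ?_ (abs_lt.1 hxr)
  · refine ((hasDerivAt_pow (e n + 1) w).const_mul (c n)).congr_deriv ?_
    rw [Nat.add_sub_cancel]
    push_cast
    ring
  · rw [norm_mul, norm_pow, Real.norm_eq_abs, Real.norm_eq_abs]
    gcongr
    exact abs_le.2 ⟨hw.1.le, hw.2.le⟩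
  · constructor <;> linarith [abs_nonneg x]
  · simp

theorem hasSum_pow_div_succ_of_abs_lt_one {x : ℝ} (hx : |x| < 1) (hx0 : x ≠ 0) :
    HasSum (fun n : ℕ => x ^ n / ((n : ℝ) + 1)) (-log (1 - x) / x) := by
  refine ((hasSum_pow_div_log_of_abs_lt_one hx).div_const x).congr_fun fun n => ?_
  rw [pow_succ, mul_div_right_comm, mul_div_cancel_right₀ _ hx0]

theorem hasDerivAt_Li2 {x : ℝ} (hx : |x| < 1) (hx0 : x ≠ 0) :
    HasDerivAt Li2 (-log (1 - x) / x) x := by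
  have hcoeff (n : ℕ) : 1 / ((n : ℝ) + 1) ^ 2 * (n + 1) = 1 / ((n : ℝ) + 1) := by
    field_simp
  have key := hasDerivAt_tsum_mul_pow (fun n => 1 / ((n : ℝ) + 1) ^ 2) (fun n => n)
    (fun r hr0 hr1 => ?_) hx
  · simp only [hcoeff, one_div_mul_eq_div] at key
    rwa [(hasSum_pow_div_succ_of_abs_lt_one hx hx0).tsum_eq] at key
  · refine (summable_geometric_of_lt_one hr0 hr1).of_nonneg_of_le (fun n => by positivity)
      fun n => ?_
    rw [hcoeff, abs_of_pos (by positivity)]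
    exact mul_le_of_le_one_left (by positivity)
      (div_le_one_of_le₀ (le_add_of_nonneg_left n.cast_nonneg) (by positivity))

theorem H_nonneg (n : ℕ) : 0 ≤ H n :=
  Finset.sum_nonneg fun k _ => by positivity

theorem H_le_self (n : ℕ) : H n ≤ n := by
  calc H n ≤ ∑ _k ∈ Finset.range n, (1 : ℝ) :=
        Finset.sum_le_sum fun k _ =>
          div_le_one_of_le₀ (le_add_of_nonneg_left k.cast_nonneg) (by positivity)
    _ = n := by simp

theorem hasSum_H_mul_pow {y : ℝ} (hy : |y| < 1) :
    HasSum (fun n : ℕ => H (n + 1) * y ^ (n + 1)) (-log (1 - y) / (1 - y)) := by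
  have hf : Summable fun n : ℕ => ‖y ^ (n + 1) / ((n : ℝ) + 1)‖ := by
    simpa [abs_pow, abs_of_nonneg (Nat.cast_add_one_pos (α := ℝ) _).le] using
      (hasSum_pow_div_log_of_abs_lt_one (x := |y|) (by rwa [abs_abs])).summable
  have hg : Summable fun n : ℕ => ‖y ^ n‖ := by
    simpa [norm_pow] using summable_geometric_of_lt_one (abs_nonneg y) hy
  -- Cauchy product of `-log (1 - y) = ∑ yⁿ⁺¹/(n+1)` with `1/(1 - y) = ∑ yⁿ`
  have hc := hasSum_sum_range_mul_of_summable_norm hf hg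
  rw [(hasSum_pow_div_log_of_abs_lt_one hy).tsum_eq,
    (hasSum_geometric_of_abs_lt_one hy).tsum_eq, ← div_eq_mul_inv] at hc
  refine hc.congr_fun fun n => ?_
  rw [H, Finset.sum_mul]
  refine Finset.sum_congr rfl fun k hk => ?_
  have hexp : k + 1 + (n - k) = n + 1 := by have := Finset.mem_range_succ_iff.1 hk; omega
  rw [div_mul_eq_mul_div (y ^ (k + 1)), ← pow_add, hexp, one_div_mul_eq_div]

theorem hasDerivAt_tsum_H_mul_pow_odd {z : ℝ} (hz : |z| < 1) :
    HasDerivAt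
      (fun w => ∑' n : ℕ, H (n + 1) / (2 * ((n : ℝ) + 1) + 1) * w ^ (2 * (n + 1) + 1))
      (-log (1 - z ^ 2) / (1 - z ^ 2)) z := by
  have hcoeff (n : ℕ) :
      H (n + 1) / (2 * ((n : ℝ) + 1) + 1) * (((2 * (n + 1) : ℕ) : ℝ) + 1) = H (n + 1) := by
    push_cast
    field_simp
  have key := hasDerivAt_tsum_mul_pow (fun n => H (n + 1) / (2 * ((n : ℝ) + 1) + 1))
    (fun n => 2 * (n + 1)) (fun r hr0 hr1 => ?_) hz
  · have hz2 : |z ^ 2| < 1 := by rw [abs_pow, sq_lt_one_iff₀ (abs_nonneg z)]; exact hz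
    simp only [hcoeff, pow_mul] at key
    rwa [(hasSum_H_mul_pow hz2).tsum_eq] at key
  · have hq : ‖r ^ 2‖ < 1 := by
      rw [norm_pow, Real.norm_eq_abs, abs_of_nonneg hr0, sq_lt_one_iff₀ hr0]; exact hr1
    refine ((summable_pow_mul_geometric_of_norm_lt_one 1 hq).comp_injective
      (add_left_injective 1)).of_nonneg_of_le (fun n => by positivity) fun n => ?_
    simp only [hcoeff, Function.comp_apply, pow_one, pow_mul, abs_of_nonneg (H_nonneg _)]
    gcongr
    exact H_le_self _

theorem hasDerivAt_dilog_closedForm {w : ℝ} (hw : w ∈ Ioo (-1 : ℝ) 1) :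
    HasDerivAt (fun w => (1 / 2) * ((1 / 2) * log (1 - w) ^ 2 - (1 / 2) * log (1 + w) ^ 2
        + log 2 * (log (1 - w) - log (1 + w)) + Li2 ((1 + w) / 2) - Li2 ((1 - w) / 2)))
      (-log (1 - w ^ 2) / (1 - w ^ 2)) w := by
  obtain ⟨hw1, hw2⟩ := hw
  have h1w : 1 - w ≠ 0 := by linarith
  have h2w : 1 + w ≠ 0 := by linarith
  have hlog1 : HasDerivAt (fun y => log (1 - y)) (-1 / (1 - w)) w := by
    simpa [neg_div] using ((hasDerivAt_id w).const_sub 1).log h1w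
  have hlog2 : HasDerivAt (fun y => log (1 + y)) (1 / (1 + w)) w := by
    simpa using ((hasDerivAt_id w).const_add 1).log h2w
  have hLi2p : HasDerivAt (fun y => Li2 ((1 + y) / 2)) (-log ((1 - w) / 2) / (1 + w)) w := by
    refine ((hasDerivAt_Li2 (x := (1 + w) / 2) (abs_lt.2 ⟨by linarith, by linarith⟩)
      (by linarith)).comp w (((hasDerivAt_id w).const_add 1).div_const 2)).congr_deriv ?_
    rw [show 1 - (1 + w) / 2 = (1 - w) / 2 by ring]
    field_simp
  have hLi2m : HasDerivAt (fun y => Li2 ((1 - y) / 2)) (log ((1 + w) / 2) / (1 - w)) w := by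
    refine ((hasDerivAt_Li2 (x := (1 - w) / 2) (abs_lt.2 ⟨by linarith, by linarith⟩)
      (by linarith)).comp w (((hasDerivAt_id w).const_sub 1).div_const 2)).congr_deriv ?_
    rw [show 1 - (1 - w) / 2 = (1 + w) / 2 by ring]
    field_simp
  have h := ((((((hlog1.pow 2).const_mul (1 / 2)).sub ((hlog2.pow 2).const_mul (1 / 2))).add
    ((hlog1.sub hlog2).const_mul (log 2))).add hLi2p).sub hLi2m).const_mul (1 / 2)
  refine h.congr_deriv ?_
  rw [log_div h1w two_ne_zero, log_div h2w two_ne_zero,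
    show 1 - w ^ 2 = (1 - w) * (1 + w) by ring, log_mul h1w h2w]
  field_simp
  ring

theorem stmt15 (z : ℝ) (h1 : -1 < z) (h2 : z < 1) :
    ∑' n : ℕ, H (n + 1) / (2 * ((n : ℝ) + 1) + 1) * z ^ (2 * (n + 1) + 1) =
      (1 / 2) * ((1 / 2) * Real.log (1 - z) ^ 2 - (1 / 2) * Real.log (1 + z) ^ 2
        + Real.log 2 * Real.log ((1 - z) / (1 + z))
        + Li2 ((1 + z) / 2) - Li2 ((1 - z) / 2)) := by
  rw [log_div (by linarith) (by linarith)]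
  refine isOpen_Ioo.eqOn_of_hasDerivAt_eq (convex_Ioo (-1 : ℝ) 1).isPreconnected
    (fun w hw => hasDerivAt_tsum_H_mul_pow_odd (abs_lt.2 hw))
    (fun w hw => hasDerivAt_dilog_closedForm hw)
    (by norm_num : (0 : ℝ) ∈ Ioo (-1) 1) (by simp) ⟨h1, h2⟩
end

section
/- Let u = (√8 + i)/3 and x = (1/2)·(1 + i/√8) be complex numbers. Then Li₂(u⁴) = 2·Li₂(u²) − 2·Li₂(x) − (Log(1 − x))², where Li₂(w) = ∑_{n=1}^∞ wⁿ/n² (which converges since |u| = 1 and |x| < 1) and Log denotes the principal branch of the complex logarithm. -/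
/-!
Two functional equations of the dilogarithm combine to the identity. Splitting the series into
even and odd terms gives the duplication formula `Li₂(w²) = 2 (Li₂ w + Li₂ (-w))`, whence
`Li₂(u⁴) = 2 Li₂(u²) + 2 Li₂(-u²)`. Landen's identity `Li₂(z/(z-1)) + Li₂ z = -Log²(1-z)/2`
holds for `|z| ≤ 1`, `Re z ≤ 1/2`: where `Re z < 1/2` the map `z ↦ z/(z-1)` stays in the open
unit disc and the difference of the two sides has derivative zero, so it vanishes along the
segment `[0, z)`, and by continuity also at `z`. The point `x` has `Re x = 1/2` and
`x/(x-1) = -u²`.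
-/

/-- The complex dilogarithm `Li₂(w) = ∑_{n=1}^∞ wⁿ/n²` (for `|w| ≤ 1`). -/
noncomputable def Li2C (w : ℂ) : ℂ := ∑' n : ℕ, w ^ (n + 1) / ((n : ℂ) + 1) ^ 2

open Complex Metric Set

section Dilogarithm

lemma summable_one_div_nat_add_one_sq : Summable (fun n : ℕ => 1 / ((n : ℝ) + 1) ^ 2) := by
  simpa using (summable_nat_add_iff 1).mpr (Real.summable_one_div_nat_pow.mpr one_lt_two)

lemma norm_pow_succ_div_sq_le {w : ℂ} (hw : ‖w‖ ≤ 1) (n : ℕ) :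
    ‖w ^ (n + 1) / ((n : ℂ) + 1) ^ 2‖ ≤ 1 / ((n : ℝ) + 1) ^ 2 := by
  rw [norm_div, norm_pow, norm_pow, ← Nat.cast_add_one, Complex.norm_natCast, Nat.cast_add_one]
  gcongr
  exact pow_le_one₀ (norm_nonneg _) hw

lemma hasSum_Li2C {w : ℂ} (hw : ‖w‖ ≤ 1) :
    HasSum (fun n : ℕ => w ^ (n + 1) / ((n : ℂ) + 1) ^ 2) (Li2C w) :=
  (Summable.of_norm_bounded summable_one_div_nat_add_one_sq (norm_pow_succ_div_sq_le hw)).hasSum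

lemma Li2C_zero : Li2C 0 = 0 := by
  simp [Li2C]

lemma continuousOn_Li2C : ContinuousOn Li2C (closedBall 0 1) :=
  continuousOn_tsum (fun _ => (continuousOn_pow _).div_const _) summable_one_div_nat_add_one_sq
    fun n _ hw => norm_pow_succ_div_sq_le (mem_closedBall_zero_iff.mp hw) n

noncomputable def Li2CDeriv (z : ℂ) : ℂ := ∑' n : ℕ, z ^ n / ((n : ℂ) + 1)

lemma hasDerivAt_Li2C {z : ℂ} (hz : ‖z‖ < 1) : HasDerivAt Li2C (Li2CDeriv z) z := by
  obtain ⟨r, hzr, hr1⟩ := exists_between hz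
  have hr0 : 0 < r := (norm_nonneg z).trans_lt hzr
  refine hasDerivAt_tsum_of_isPreconnected
    (g := fun (n : ℕ) (w : ℂ) => w ^ (n + 1) / ((n : ℂ) + 1) ^ 2)
    (g' := fun (n : ℕ) (w : ℂ) => w ^ n / ((n : ℂ) + 1))
    (summable_geometric_of_lt_one hr0.le hr1) isOpen_ball (convex_ball _ _).isPreconnected (fun n y _ => ?_) (fun n y hy => ?_)
    (mem_ball_self hr0) (hasSum_Li2C (by simp)).summable (mem_ball_zero_iff.mpr hzr)
  · have hn : (n : ℂ) + 1 ≠ 0 := Nat.cast_add_one_ne_zero n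
    refine ((hasDerivAt_pow (n + 1) y).div_const (((n : ℂ) + 1) ^ 2)).congr_deriv ?_
    rw [Nat.add_sub_cancel]
    push_cast
    field_simp
  · rw [norm_div, norm_pow, ← Nat.cast_add_one, Complex.norm_natCast]
    calc ‖y‖ ^ n / ((n + 1 : ℕ) : ℝ) ≤ ‖y‖ ^ n :=
          div_le_self (by positivity) (by exact_mod_cast Nat.le_add_left 1 n)
      _ ≤ r ^ n := pow_le_pow_left₀ (norm_nonneg _) (mem_ball_zero_iff.mp hy).le n

lemma mul_Li2CDeriv {z : ℂ} (hz : ‖z‖ < 1) : z * Li2CDeriv z = -log (1 - z) := by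
  rw [Li2CDeriv, ← tsum_mul_left]
  refine ((hasSum_taylorSeries_neg_log' hz).congr_fun fun n => ?_).tsum_eq
  ring

lemma Li2C_sq {z : ℂ} (hz : ‖z‖ ≤ 1) : Li2C (z ^ 2) = 2 * (Li2C z + Li2C (-z)) := by
  set f : ℕ → ℂ := fun n => z ^ (n + 1) / ((n : ℂ) + 1) ^ 2 + (-z) ^ (n + 1) / ((n : ℂ) + 1) ^ 2
  have hsum : HasSum f (Li2C z + Li2C (-z)) :=
    (hasSum_Li2C hz).add (hasSum_Li2C (by simpa using hz))
  have heven : HasSum (fun k => f (2 * k)) 0 := by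
    convert hasSum_zero with k
    simp only [f, (Odd.neg_pow ⟨k, rfl⟩ z)]
    ring
  have hodd : HasSum (fun k => f (2 * k + 1)) (Li2C (z ^ 2) / 2) := by
    have hz2 : ‖z ^ 2‖ ≤ 1 := by rw [norm_pow]; exact pow_le_one₀ (norm_nonneg z) hz
    refine ((hasSum_Li2C hz2).div_const 2).congr_fun fun k => ?_
    have hk : (k : ℂ) + 1 ≠ 0 := Nat.cast_add_one_ne_zero k
    have hpow : z ^ (2 * k + 1 + 1) = (z ^ 2) ^ (k + 1) := by ring
    have hden : ((2 * k + 1 : ℕ) : ℂ) + 1 = 2 * ((k : ℂ) + 1) := by push_cast; ring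
    simp only [f, Even.neg_pow (⟨k + 1, by ring⟩ : Even (2 * k + 1 + 1)), hpow, hden]
    field_simp
    ring
  rw [hsum.unique (heven.even_add_odd hodd)]
  ring

end Dilogarithm

section Landen

lemma sq_norm_sub_one (z : ℂ) : ‖z - 1‖ ^ 2 = ‖z‖ ^ 2 - 2 * z.re + 1 := by
  simp only [Complex.sq_norm, normSq_apply, sub_re, one_re, sub_im, one_im, sub_zero]
  ring

lemma norm_le_norm_sub_one_iff {z : ℂ} : ‖z‖ ≤ ‖z - 1‖ ↔ z.re ≤ 1 / 2 := by
  rw [← sq_le_sq₀ (norm_nonneg _) (norm_nonneg _), sq_norm_sub_one]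
  constructor <;> intro h <;> linarith

lemma norm_lt_norm_sub_one_iff {z : ℂ} : ‖z‖ < ‖z - 1‖ ↔ z.re < 1 / 2 := by
  rw [← sq_lt_sq₀ (norm_nonneg _) (norm_nonneg _), sq_norm_sub_one]
  constructor <;> intro h <;> linarith

lemma sub_one_ne_zero_of_re_le {z : ℂ} (h : z.re ≤ 1 / 2) : z - 1 ≠ 0 := by
  rintro hz
  rw [sub_eq_zero.mp hz] at h
  norm_num at h

lemma one_sub_mem_slitPlane_of_re_le {z : ℂ} (h : z.re ≤ 1 / 2) : 1 - z ∈ slitPlane :=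
  mem_slitPlane_iff.mpr (Or.inl (by simp only [sub_re, one_re]; linarith))

lemma norm_div_sub_one_le_one {z : ℂ} (h : z.re ≤ 1 / 2) : ‖z / (z - 1)‖ ≤ 1 := by
  rw [norm_div, div_le_one (norm_pos_iff.mpr (sub_one_ne_zero_of_re_le h))]
  exact norm_le_norm_sub_one_iff.mpr h

lemma norm_div_sub_one_lt_one {z : ℂ} (h : z.re < 1 / 2) : ‖z / (z - 1)‖ < 1 := by
  rw [norm_div, div_lt_one (norm_pos_iff.mpr (sub_one_ne_zero_of_re_le h.le))]
  exact norm_lt_norm_sub_one_iff.mpr h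

lemma log_one_sub_div_sub_one {z : ℂ} (h : z.re ≤ 1 / 2) :
    log (1 - z / (z - 1)) = -log (1 - z) := by
  have hz1 := sub_one_ne_zero_of_re_le h
  have h1z := slitPlane_ne_zero (one_sub_mem_slitPlane_of_re_le h)
  have hinv : 1 - z / (z - 1) = (1 - z)⁻¹ := by
    field_simp
    ring
  rw [hinv, log_inv _ (mem_slitPlane_iff_arg.mp (one_sub_mem_slitPlane_of_re_le h)).1]

noncomputable def landenRemainder (z : ℂ) : ℂ :=
  2 * Li2C (z / (z - 1)) + 2 * Li2C z + log (1 - z) ^ 2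

lemma hasDerivAt_landenRemainder {z : ℂ} (hz : ‖z‖ < 1) (hre : z.re < 1 / 2) :
    HasDerivAt landenRemainder 0 z := by
  have hz1 := sub_one_ne_zero_of_re_le hre.le
  have hw := norm_div_sub_one_lt_one hre
  have hdiv : HasDerivAt (fun w => w / (w - 1)) (-1 / (z - 1) ^ 2) z := by
    refine ((hasDerivAt_id z).div ((hasDerivAt_id z).sub_const 1) hz1).congr_deriv ?_
    simp only [id]
    ring
  have hlog : HasDerivAt (fun w => log (1 - w)) (-1 / (1 - z)) z :=
    ((hasDerivAt_id z).const_sub 1).clog (one_sub_mem_slitPlane_of_re_le hre.le)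
  refine ((((hasDerivAt_Li2C hw).comp z hdiv).const_mul 2).add
    ((hasDerivAt_Li2C hz).const_mul 2) |>.add (hlog.pow 2)).congr_deriv ?_
  rcases eq_or_ne z 0 with rfl | hz0
  · simp
  have hderiv_div : Li2CDeriv (z / (z - 1)) = log (1 - z) * (z - 1) / z := by
    rw [eq_div_iff hz0, ← neg_neg (log (1 - z)), ← log_one_sub_div_sub_one hre.le,
      ← mul_Li2CDeriv hw]
    field_simp
  have hderiv : Li2CDeriv z = -log (1 - z) / z := by
    rw [eq_div_iff hz0, ← mul_Li2CDeriv hz, mul_comm]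
  have h1z := slitPlane_ne_zero (one_sub_mem_slitPlane_of_re_le hre.le)
  rw [hderiv_div, hderiv]
  field_simp
  ring

lemma continuousOn_landenRemainder :
    ContinuousOn landenRemainder {z | ‖z‖ ≤ 1 ∧ z.re ≤ 1 / 2} := by
  have hdiv : ContinuousOn (fun w : ℂ => w / (w - 1)) {z | ‖z‖ ≤ 1 ∧ z.re ≤ 1 / 2} :=
    continuousOn_id.div (continuousOn_id.sub continuousOn_const)
      fun w hw => sub_one_ne_zero_of_re_le hw.2
  have hlog : ContinuousOn (fun w : ℂ => log (1 - w)) {z | ‖z‖ ≤ 1 ∧ z.re ≤ 1 / 2} :=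
    (continuousOn_const.sub continuousOn_id).clog
      fun w hw => one_sub_mem_slitPlane_of_re_le hw.2
  refine ((continuousOn_const.mul (continuousOn_Li2C.comp hdiv fun w hw => ?_)).add
    (continuousOn_const.mul (continuousOn_Li2C.mono fun w hw => ?_))).add (hlog.pow 2)
  · exact mem_closedBall_zero_iff.mpr (norm_div_sub_one_le_one hw.2)
  · exact mem_closedBall_zero_iff.mpr hw.1

lemma landenRemainder_eq_zero {z : ℂ} (hz : ‖z‖ ≤ 1) (hre : z.re ≤ 1 / 2) :
    landenRemainder z = 0 := by
  have hnorm {t : ℝ} (ht : 0 ≤ t) : ‖(t : ℂ) * z‖ = t * ‖z‖ := by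
    rw [norm_mul, norm_real, Real.norm_of_nonneg ht]
  have hpath : ContinuousOn (fun t : ℝ => landenRemainder (t * z)) (Icc 0 1) := by
    refine continuousOn_landenRemainder.comp (by fun_prop) fun t ht => ⟨?_, ?_⟩
    · rw [hnorm ht.1]
      exact (mul_le_of_le_one_right ht.1 hz).trans ht.2
    · rw [re_ofReal_mul]
      nlinarith [ht.1, ht.2]
  have hderiv : ∀ t ∈ Ico (0 : ℝ) 1,
      HasDerivWithinAt (fun t : ℝ => landenRemainder (t * z)) 0 (Ici t) t := by
    intro t ht
    have hnorm_lt : ‖(t : ℂ) * z‖ < 1 := by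
      rw [hnorm ht.1]
      exact (mul_le_of_le_one_right ht.1 hz).trans_lt ht.2
    have hre_lt : ((t : ℂ) * z).re < 1 / 2 := by
      rw [re_ofReal_mul]
      nlinarith [ht.1, ht.2]
    have := ((hasDerivAt_landenRemainder hnorm_lt hre_lt).comp (t : ℂ)
      ((hasDerivAt_id _).mul_const z)).comp_ofReal
    simpa using this.hasDerivWithinAt
  simpa [landenRemainder, Li2C_zero] using
    constant_of_has_deriv_right_zero hpath hderiv 1 (right_mem_Icc.mpr zero_le_one)

lemma Li2C_div_sub_one_add_Li2C {z : ℂ} (hz : ‖z‖ ≤ 1) (hre : z.re ≤ 1 / 2) :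
    Li2C (z / (z - 1)) + Li2C z = -log (1 - z) ^ 2 / 2 := by
  have := landenRemainder_eq_zero hz hre
  rw [landenRemainder] at this
  linear_combination this / 2

lemma Li2C_pow_four_of_div_sub_one_eq {w z : ℂ} (hz : ‖z‖ ≤ 1) (hre : z.re ≤ 1 / 2)
    (hwz : z / (z - 1) = -w ^ 2) :
    Li2C (w ^ 4) = 2 * Li2C (w ^ 2) - 2 * Li2C z - log (1 - z) ^ 2 := by
  have hw : ‖w ^ 2‖ ≤ 1 := by
    rw [← norm_neg, ← hwz]
    exact norm_div_sub_one_le_one hre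
  have hlanden := Li2C_div_sub_one_add_Li2C hz hre
  rw [hwz] at hlanden
  rw [show w ^ 4 = (w ^ 2) ^ 2 by ring, Li2C_sq hw]
  linear_combination 2 * hlanden

end Landen

theorem stmt18 (u x : ℂ) (hu : u = ((Real.sqrt 8 : ℂ) + Complex.I) / 3)
    (hx : x = (1 / 2) * (1 + Complex.I / (Real.sqrt 8 : ℂ))) :
    Li2C (u ^ 4) = 2 * Li2C (u ^ 2) - 2 * Li2C x - (Complex.log (1 - x)) ^ 2 := by
  set s : ℝ := Real.sqrt 8
  have hs : s ^ 2 = 8 := Real.sq_sqrt (by norm_num)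
  have hs0 : s ≠ 0 := (Real.sqrt_pos.mpr (by norm_num)).ne'
  have hxre : x.re = 1 / 2 := by simp [hx]
  have hxim : x.im = 1 / (2 * s) := by simp [hx, mul_comm]
  have hxnorm : ‖x‖ ≤ 1 := by
    rw [← sq_le_one_iff₀ (norm_nonneg x), Complex.sq_norm, normSq_apply, hxre, hxim]
    field_simp
    rw [hs]
    norm_num
  have hxu : x / (x - 1) = -u ^ 2 := by
    have hsC : (s : ℂ) ^ 2 = 8 := by exact_mod_cast hs
    have hs0C : (s : ℂ) ≠ 0 := by exact_mod_cast hs0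
    rw [div_eq_iff (sub_one_ne_zero_of_re_le hxre.le), hu, hx]
    field_simp
    linear_combination (-(s : ℂ) - I) * hsC + ((s : ℂ) + I) * I_sq
  exact Li2C_pow_four_of_div_sub_one_eq hxnorm hxre.le hxu
end
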